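/- arXiv:2502.03641 — 6 statements merged into one kernel-verified Lean document; each statement's English description precedes it below -/
import Mathlib

section
/- In the binary monopoly model, the optimal-price function p satisfies p(0) = p_L* and p(1) = p_H*, is continuously differentiable on (0,1) with p'(μ) = (R_L'(p(μ)) − R_H'(p(μ))) / ((1−μ)·R_L''(p(μ)) + μ·R_H''(p(μ))), and p'(μ) > 0 for every μ ∈ (0,1). -/
/-!
Write `f = R_L'` and `g = R_H'`, both strictly decreasing, with `f (p_L*) = 0 = g (p_H*)`.
On `[p_L*, p_H*]` the first-order condition `(1 - μ) f q + μ g q = 0` can be solved for the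
weight, `μ = f q / (f q - g q)`, and this map is strictly increasing from `0` to `1`, so `p` is
its inverse. Monotonicity and surjectivity make `p` continuous, the inverse function theorem
gives `p' = (f - g) / ((1 - μ) f' + μ g')`, and the sign follows from `f < g` and `f', g' < 0`.
-/

open Set Filter

lemma contDiffOn_one_of_hasDerivAt {𝕜 : Type*} [NontriviallyNormedField 𝕜] {f f' : 𝕜 → 𝕜}
    {s : Set 𝕜} (hs : IsOpen s) (hf : ∀ x ∈ s, HasDerivAt f (f' x) x)
    (hf' : ContinuousOn f' s) : ContDiffOn 𝕜 1 f s := by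
  rw [show (1 : WithTop ℕ∞) = 0 + 1 from rfl, contDiffOn_succ_iff_deriv_of_isOpen hs]
  exact ⟨fun x hx => (hf x hx).differentiableAt.differentiableWithinAt, by simp,
    contDiffOn_zero.2 (hf'.congr fun x hx => (hf x hx).deriv)⟩

lemma ContDiffOn.hasDerivAt_deriv_of_isOpen {f : ℝ → ℝ} {s : Set ℝ} (hf : ContDiffOn ℝ 2 f s)
    (hs : IsOpen s) {x : ℝ} (hx : x ∈ s) : HasDerivAt (deriv f) (deriv (deriv f) x) x :=
  (((hf.deriv_of_isOpen hs (by norm_num : (1 : WithTop ℕ∞) + 1 ≤ 2)).differentiableOn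
    one_ne_zero) x hx |>.differentiableAt (hs.mem_nhds hx)).hasDerivAt

lemma ContDiffOn.strictAntiOn_deriv {f : ℝ → ℝ} {s : Set ℝ} (hf : ContDiffOn ℝ 2 f s)
    (hs : IsOpen s) (hs' : Convex ℝ s) (hf'' : ∀ x ∈ s, deriv (deriv f) x < 0) :
    StrictAntiOn (deriv f) s :=
  strictAntiOn_of_deriv_neg hs' (hf.continuousOn_deriv_of_isOpen hs one_le_two)
    fun x hx => hf'' x (hs.interior_eq ▸ hx)

section InverseOfStrictMono

variable {φ p : ℝ → ℝ} {a b c d : ℝ}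

lemma StrictMonoOn.monotoneOn_of_rightInvOn (hφ : StrictMonoOn φ (Icc a b))
    (hp : ∀ μ ∈ Icc c d, p μ ∈ Icc a b ∧ φ (p μ) = μ) : MonotoneOn p (Icc c d) := by
  intro μ hμ ν hν hμν
  rw [← hφ.le_iff_le (hp μ hμ).1 (hp ν hν).1, (hp μ hμ).2, (hp ν hν).2]
  exact hμν

lemma StrictMonoOn.apply_eq_of_rightInvOn (hφ : StrictMonoOn φ (Icc a b))
    (hp : ∀ μ ∈ Icc c d, p μ ∈ Icc a b ∧ φ (p μ) = μ) {μ q : ℝ} (hμ : μ ∈ Icc c d)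
    (hq : q ∈ Icc a b) (hφq : φ q = μ) : p μ = q :=
  hφ.injOn (hp μ hμ).1 hq ((hp μ hμ).2.trans hφq.symm)

lemma StrictMonoOn.Icc_subset_image_of_rightInvOn (hφ : StrictMonoOn φ (Icc a b))
    (ha : φ a = c) (hb : φ b = d) (hp : ∀ μ ∈ Icc c d, p μ ∈ Icc a b ∧ φ (p μ) = μ) :
    Icc a b ⊆ p '' Icc c d := by
  intro q hq
  have hab : a ≤ b := hq.1.trans hq.2
  have hφq : φ q ∈ Icc c d :=
    ⟨ha ▸ hφ.monotoneOn ⟨le_rfl, hab⟩ hq hq.1, hb ▸ hφ.monotoneOn hq ⟨hab, le_rfl⟩ hq.2⟩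
  exact ⟨φ q, hφq, hφ.apply_eq_of_rightInvOn hp hφq hq rfl⟩

lemma mem_Ioo_of_rightInvOn (ha : φ a = c) (hb : φ b = d)
    (hp : ∀ μ ∈ Icc c d, p μ ∈ Icc a b ∧ φ (p μ) = μ)
    {μ : ℝ} (hμ : μ ∈ Ioo c d) : p μ ∈ Ioo a b := by
  obtain ⟨hpμ, hφpμ⟩ := hp μ (Ioo_subset_Icc_self hμ)
  refine ⟨hpμ.1.lt_of_ne ?_, hpμ.2.lt_of_ne ?_⟩ <;> rintro rfl
  exacts [hμ.1.ne (ha ▸ hφpμ), hμ.2.ne' (hb ▸ hφpμ)]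

lemma StrictMonoOn.continuousAt_of_rightInvOn (hφ : StrictMonoOn φ (Icc a b))
    (ha : φ a = c) (hb : φ b = d) (hp : ∀ μ ∈ Icc c d, p μ ∈ Icc a b ∧ φ (p μ) = μ)
    {μ : ℝ} (hμ : μ ∈ Ioo c d) : ContinuousAt p μ := by
  have hpμ := mem_Ioo_of_rightInvOn ha hb hp hμ
  exact continuousAt_of_monotoneOn_of_image_mem_nhds (hφ.monotoneOn_of_rightInvOn hp)
    (Icc_mem_nhds hμ.1 hμ.2) <|
    mem_of_superset (Icc_mem_nhds hpμ.1 hpμ.2) (hφ.Icc_subset_image_of_rightInvOn ha hb hp)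

end InverseOfStrictMono

/-- The weight `μ` for which `q` solves `(1 - μ) f q + μ g q = 0`. -/
noncomputable def weightOfPrice (f g : ℝ → ℝ) (q : ℝ) : ℝ := f q / (f q - g q)

lemma weightOfPrice_eq_of_mix_eq_zero {f g : ℝ → ℝ} {q μ : ℝ}
    (h : (1 - μ) * f q + μ * g q = 0) (hfg : f q - g q ≠ 0) : weightOfPrice f g q = μ := by
  rw [weightOfPrice, div_eq_iff hfg]
  linear_combination h

lemma hasDerivAt_weightOfPrice {f g : ℝ → ℝ} {f' g' q : ℝ} (hf : HasDerivAt f f' q)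
    (hg : HasDerivAt g g' q) (hfg : f q - g q ≠ 0) :
    HasDerivAt (weightOfPrice f g)
      (((1 - weightOfPrice f g q) * f' + weightOfPrice f g q * g') / (f q - g q)) q := by
  refine (hf.div (hf.sub hg) hfg).congr_deriv ?_
  simp only [weightOfPrice, Pi.sub_apply]
  field_simp
  ring

lemma hasDerivAt_of_weightOfPrice_eq {f g p : ℝ → ℝ} {f' g' μ c d : ℝ}
    (hp : ∀ ν ∈ Icc c d, weightOfPrice f g (p ν) = ν) (hμ : μ ∈ Ioo c d)
    (hpμ : ContinuousAt p μ) (hf : HasDerivAt f f' (p μ)) (hg : HasDerivAt g g' (p μ))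
    (hfg : f (p μ) - g (p μ) ≠ 0) (hden : (1 - μ) * f' + μ * g' ≠ 0) :
    HasDerivAt p ((f (p μ) - g (p μ)) / ((1 - μ) * f' + μ * g')) μ := by
  have hφ := hasDerivAt_weightOfPrice hf hg hfg
  rw [hp μ (Ioo_subset_Icc_self hμ)] at hφ
  rw [← inv_div]
  exact hφ.of_local_left_inverse hpμ (div_ne_zero hden hfg) <|
    eventually_of_mem (Icc_mem_nhds hμ.1 hμ.2) hp

section WeightOfPrice

variable {f g : ℝ → ℝ} {a b : ℝ}

lemma sub_neg_of_strictAntiOn (hf : StrictAntiOn f (Icc a b)) (hg : StrictAntiOn g (Icc a b))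
    (hfa : f a = 0) (hgb : g b = 0) (hab : a < b) {q : ℝ} (hq : q ∈ Icc a b) : f q - g q < 0 := by
  have hfq : f q ≤ 0 := hfa ▸ hf.antitoneOn ⟨le_rfl, hab.le⟩ hq hq.1
  have hgq : 0 ≤ g q := hgb ▸ hg.antitoneOn hq ⟨hab.le, le_rfl⟩ hq.2
  rcases hq.1.eq_or_lt with rfl | hlt
  · linarith [hgb ▸ hg ⟨le_rfl, hab.le⟩ ⟨hab.le, le_rfl⟩ hab]
  · linarith [hfa ▸ hf ⟨le_rfl, hab.le⟩ hq hlt]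

lemma weightOfPrice_left (hfa : f a = 0) : weightOfPrice f g a = 0 := by
  simp [weightOfPrice, hfa]

lemma weightOfPrice_right (hf : StrictAntiOn f (Icc a b)) (hfa : f a = 0) (hgb : g b = 0)
    (hab : a < b) : weightOfPrice f g b = 1 := by
  have hfb : f b ≠ 0 := (hfa ▸ hf ⟨le_rfl, hab.le⟩ ⟨hab.le, le_rfl⟩ hab).ne
  simp [weightOfPrice, hgb, hfb]

lemma strictMonoOn_weightOfPrice (hf : StrictAntiOn f (Icc a b))
    (hg : StrictAntiOn g (Icc a b)) (hfa : f a = 0) (hgb : g b = 0) (hab : a < b) :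
    StrictMonoOn (weightOfPrice f g) (Icc a b) := by
  intro q hq r hr hqr
  have hfg := fun x (hx : x ∈ Icc a b) => sub_neg_of_strictAntiOn hf hg hfa hgb hab hx
  -- with `u = -f ≥ 0` increasing and `v = g ≥ 0` decreasing, `u / (u + v)` increases
  have hfq : f q ≤ 0 := hfa ▸ hf.antitoneOn ⟨le_rfl, hab.le⟩ hq hq.1
  have hgr : 0 ≤ g r := hgb ▸ hg.antitoneOn hr ⟨hab.le, le_rfl⟩ hr.2
  have hfqr := hf hq hr hqr
  have hgqr := hg hq hr hqr
  rw [weightOfPrice, weightOfPrice, ← neg_div_neg_eq, ← neg_div_neg_eq (f r),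
    div_lt_div_iff₀ (by linarith [hfg q hq]) (by linarith [hfg r hr])]
  nlinarith [mul_le_mul_of_nonneg_right hfqr.le hgr,
    mul_lt_mul_of_neg_left hgqr (hfqr.trans_le hfq)]

end WeightOfPrice

theorem stmt_1_general
    (I : Set ℝ) (DL DH RL RH : ℝ → ℝ) (pLs pHs : ℝ)
    (hIopen : IsOpen I) (hIconv : Convex ℝ I)
    (hRL : RL = fun q => q * DL q) (hRH : RH = fun q => q * DH q)
    (hDL : ContDiffOn ℝ 2 DL I) (hDH : ContDiffOn ℝ 2 DH I)
    (hRL'' : ∀ q ∈ I, deriv (deriv RL) q < 0) (hRH'' : ∀ q ∈ I, deriv (deriv RH) q < 0)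
    (hpLs : pLs ∈ I) (hpHs : pHs ∈ I) (hlt : pLs < pHs)
    (hRL' : deriv RL pLs = 0) (hRH' : deriv RH pHs = 0)
    (p : ℝ → ℝ)
    (hp : ∀ μ ∈ Set.Icc (0:ℝ) 1, p μ ∈ Set.Icc pLs pHs ∧
      (1 - μ) * deriv RL (p μ) + μ * deriv RH (p μ) = 0) :
    p 0 = pLs ∧ p 1 = pHs ∧ ContDiffOn ℝ 1 p (Set.Ioo 0 1) ∧
    ∀ μ ∈ Set.Ioo (0:ℝ) 1,
      deriv p μ = (deriv RL (p μ) - deriv RH (p μ)) /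
        ((1 - μ) * deriv (deriv RL) (p μ) + μ * deriv (deriv RH) (p μ)) ∧
      0 < deriv p μ := by
  have hIcc : Icc pLs pHs ⊆ I := hIconv.ordConnected.out hpLs hpHs
  have hRL2 : ContDiffOn ℝ 2 RL I := hRL ▸ contDiffOn_id.mul hDL
  have hRH2 : ContDiffOn ℝ 2 RH I := hRH ▸ contDiffOn_id.mul hDH
  have hfL := (hRL2.strictAntiOn_deriv hIopen hIconv hRL'').mono hIcc
  have hfH := (hRH2.strictAntiOn_deriv hIopen hIconv hRH'').mono hIcc
  have hφ := strictMonoOn_weightOfPrice hfL hfH hRL' hRH' hlt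
  have hφ0 := weightOfPrice_left (g := deriv RH) hRL'
  have hφ1 := weightOfPrice_right hfL hRL' hRH' hlt
  have hsub μ (hμ : μ ∈ Icc (0 : ℝ) 1) :=
    sub_neg_of_strictAntiOn hfL hfH hRL' hRH' hlt (hp μ hμ).1
  have hinv : ∀ μ ∈ Icc (0 : ℝ) 1,
      p μ ∈ Icc pLs pHs ∧ weightOfPrice (deriv RL) (deriv RH) (p μ) = μ := fun μ hμ =>
    ⟨(hp μ hμ).1, weightOfPrice_eq_of_mix_eq_zero (hp μ hμ).2 (hsub μ hμ).ne⟩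
  have hpI μ (hμ : μ ∈ Ioo (0 : ℝ) 1) : p μ ∈ I :=
    hIcc (Ioo_subset_Icc_self (mem_Ioo_of_rightInvOn hφ0 hφ1 hinv hμ))
  have hden μ (hμ : μ ∈ Ioo (0 : ℝ) 1) :
      (1 - μ) * deriv (deriv RL) (p μ) + μ * deriv (deriv RH) (p μ) < 0 :=
    add_neg (mul_neg_of_pos_of_neg (sub_pos.2 hμ.2) (hRL'' _ (hpI μ hμ)))
      (mul_neg_of_pos_of_neg hμ.1 (hRH'' _ (hpI μ hμ)))
  have hcont μ (hμ : μ ∈ Ioo (0 : ℝ) 1) := hφ.continuousAt_of_rightInvOn hφ0 hφ1 hinv hμ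
  have hderiv μ (hμ : μ ∈ Ioo (0 : ℝ) 1) :=
    hasDerivAt_of_weightOfPrice_eq (fun ν hν => (hinv ν hν).2) hμ (hcont μ hμ)
      (hRL2.hasDerivAt_deriv_of_isOpen hIopen (hpI μ hμ))
      (hRH2.hasDerivAt_deriv_of_isOpen hIopen (hpI μ hμ))
      (hsub μ (Ioo_subset_Icc_self hμ)).ne (hden μ hμ).ne
  refine ⟨hφ.apply_eq_of_rightInvOn hinv ⟨le_rfl, zero_le_one⟩ ⟨le_rfl, hlt.le⟩ hφ0,
    hφ.apply_eq_of_rightInvOn hinv ⟨zero_le_one, le_rfl⟩ ⟨hlt.le, le_rfl⟩ hφ1,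
    contDiffOn_one_of_hasDerivAt isOpen_Ioo hderiv ?_, fun μ hμ => ⟨(hderiv μ hμ).deriv,
      (hderiv μ hμ).deriv ▸ div_pos_of_neg_of_neg (hsub μ (Ioo_subset_Icc_self hμ)) (hden μ hμ)⟩⟩
  have hcomp {G : ℝ → ℝ} (hG : ContinuousOn G I) : ContinuousOn (fun μ => G (p μ)) (Ioo 0 1) :=
    hG.comp (continuousOn_of_forall_continuousAt hcont) hpI
  have hfLc := hcomp (hRL2.continuousOn_deriv_of_isOpen hIopen one_le_two)
  have hfHc := hcomp (hRH2.continuousOn_deriv_of_isOpen hIopen one_le_two)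
  have hfLc' := hcomp <|
    (hRL2.deriv_of_isOpen hIopen le_rfl).continuousOn_deriv_of_isOpen hIopen le_rfl
  have hfHc' := hcomp <|
    (hRH2.deriv_of_isOpen hIopen le_rfl).continuousOn_deriv_of_isOpen hIopen le_rfl
  exact ContinuousOn.div (by fun_prop) (by fun_prop) fun μ hμ => (hden μ hμ).ne

/-- In the binary monopoly model, the optimal-price function `p` satisfies
`p(0) = p_L*`, `p(1) = p_H*`, is continuously differentiable on `(0,1)` with the stated
derivative formula, and `p'(μ) > 0` on `(0,1)`. -/
theorem stmt_1
    (I : Set ℝ) (DL DH RL RH : ℝ → ℝ) (pLs pHs : ℝ)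
    (hIopen : IsOpen I) (hIconv : Convex ℝ I) (hIpos : I ⊆ Set.Ioi (0:ℝ))
    (hRL : RL = fun q => q * DL q) (hRH : RH = fun q => q * DH q)
    (hDL : ContDiffOn ℝ 2 DL I) (hDH : ContDiffOn ℝ 2 DH I)
    (hDLpos : ∀ q ∈ I, 0 < DL q) (hDHpos : ∀ q ∈ I, 0 < DH q)
    (hDL' : ∀ q ∈ I, deriv DL q < 0) (hDH' : ∀ q ∈ I, deriv DH q < 0)
    (hRL'' : ∀ q ∈ I, deriv (deriv RL) q < 0) (hRH'' : ∀ q ∈ I, deriv (deriv RH) q < 0)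
    (hpLs : pLs ∈ I) (hpHs : pHs ∈ I) (hlt : pLs < pHs)
    (hRL' : deriv RL pLs = 0) (hRH' : deriv RH pHs = 0)
    (p : ℝ → ℝ)
    (hp : ∀ μ ∈ Set.Icc (0:ℝ) 1, p μ ∈ Set.Icc pLs pHs ∧
      (1 - μ) * deriv RL (p μ) + μ * deriv RH (p μ) = 0) :
    p 0 = pLs ∧ p 1 = pHs ∧ ContDiffOn ℝ 1 p (Set.Ioo 0 1) ∧
    ∀ μ ∈ Set.Ioo (0:ℝ) 1,
      deriv p μ = (deriv RL (p μ) - deriv RH (p μ)) /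
        ((1 - μ) * deriv (deriv RL) (p μ) + μ * deriv (deriv RH) (p μ)) ∧
      0 < deriv p μ :=
  stmt_1_general I DL DH RL RH pLs pHs hIopen hIconv hRL hRH hDL hDH hRL'' hRH'' hpLs hpHs hlt hRL'
    hRH' p hp
end

section
/- (Theorem 1(ii), value-function form.) In the binary monopoly model, for every α ∈ (0,1]: the value function W^α is concave on [0,1] if and only if E_α is nonincreasing on (p_L*, p_H*); and W^α is convex on [0,1] if and only if E_α is nondecreasing on (p_L*, p_H*). -/
/-!
The first-order condition `(1 - μ) R_L'(p) + μ R_H'(p) = 0` is solved for `μ` by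
`μ(p) = R_L'(p) / (R_L'(p) - R_H'(p))`. On `[p_L*, p_H*]` one has `R_L' ≤ 0 ≤ R_H'`, not both zero,
and `μ' = (R_L' R_H'' - R_L'' R_H') / (R_L' - R_H')² > 0`, so `μ` is an increasing bijection onto
`[0, 1]` and `p` is its inverse: continuous, and differentiable on `(0, 1)` with `p' = 1 / μ'(p)`.
Differentiating `W^α` along `p` and substituting `μ = μ(q)` gives `(W^α)'(μ(q)) = E_α(q)`.
Hence `W^α` is concave (convex) on `[0, 1]` iff `(W^α)'` is antitone (monotone) on `(0, 1)`, iff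
`E_α` is, since `μ` reparametrizes `(p_L*, p_H*)` increasingly onto `(0, 1)`.
-/

open Set Topology

theorem StrictMonoOn.continuousOn_Icc_of_surjOn {α β : Type*} [LinearOrder α] [TopologicalSpace α]
    [OrderTopology α] [LinearOrder β] [TopologicalSpace β] [OrderTopology β] [DenselyOrdered β]
    {f : α → β} {a b : α} {c d : β} (hf : StrictMonoOn f (Icc a b))
    (hmaps : MapsTo f (Icc a b) (Icc c d)) (hsurj : SurjOn f (Icc a b) (Icc c d)) :
    ContinuousOn f (Icc a b) := by
  have himage : f '' Icc a b = Icc c d := hsurj.image_eq_of_mapsTo hmaps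
  intro x hx
  have hright : ContinuousWithinAt f (Icc a b ∩ Ici x) x := by
    rcases hx.2.lt_or_eq with hxb | rfl
    · have hb : b ∈ Icc a b := ⟨hx.1.trans hxb.le, le_rfl⟩
      refine (hf.continuousWithinAt_right_of_image_mem_nhdsWithin
        (Icc_mem_nhdsGE_of_mem ⟨hx.1, hxb⟩) ?_).mono inter_subset_right
      rw [himage]
      exact Icc_mem_nhdsGE_of_mem ⟨(hmaps hx).1, (hf hx hb hxb).trans_le (hmaps hb).2⟩
    · exact continuousWithinAt_singleton.mono fun y hy => le_antisymm hy.1.2 hy.2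
  have hleft : ContinuousWithinAt f (Icc a b ∩ Iic x) x := by
    rcases hx.1.lt_or_eq with hax | rfl
    · have ha : a ∈ Icc a b := ⟨le_rfl, hax.le.trans hx.2⟩
      refine (hf.continuousWithinAt_left_of_image_mem_nhdsWithin
        (Icc_mem_nhdsLE_of_mem ⟨hax, hx.2⟩) ?_).mono inter_subset_right
      rw [himage]
      exact Icc_mem_nhdsLE_of_mem ⟨(hmaps ha).1.trans_lt (hf ha hx hax), (hmaps hx).2⟩
    · exact continuousWithinAt_singleton.mono fun y hy => le_antisymm hy.2 hy.1.1
  exact (hleft.union hright).mono fun y hy => (le_total y x).imp (⟨hy, ·⟩) (⟨hy, ·⟩)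

theorem StrictMonoOn.of_leftInvOn {α β : Type*} [LinearOrder α] [Preorder β] {f : β → α}
    {g : α → β} {s : Set β} {t : Set α} (hg : StrictMonoOn g t) (hf : MapsTo f s t)
    (hgf : LeftInvOn g f s) : StrictMonoOn f s := fun x hx y hy hxy =>
  (hg.lt_iff_lt (hf hx) (hf hy)).mp (by rwa [hgf hx, hgf hy])

theorem StrictMonoOn.monotoneOn_comp_iff {α β γ : Type*} [LinearOrder α] [Preorder β] [Preorder γ]
    {g : α → β} {f : β → γ} {s : Set α} {t : Set β} (hg : StrictMonoOn g s) (hmaps : MapsTo g s t)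
    (hsurj : SurjOn g s t) : MonotoneOn (f ∘ g) s ↔ MonotoneOn f t := by
  refine ⟨fun h y₁ hy₁ y₂ hy₂ hy => ?_, fun h => h.comp hg.monotoneOn hmaps⟩
  obtain ⟨x₁, hx₁, rfl⟩ := hsurj hy₁
  obtain ⟨x₂, hx₂, rfl⟩ := hsurj hy₂
  exact h hx₁ hx₂ ((hg.le_iff_le hx₁ hx₂).mp hy)

theorem StrictMonoOn.antitoneOn_comp_iff {α β γ : Type*} [LinearOrder α] [Preorder β] [Preorder γ]
    {g : α → β} {f : β → γ} {s : Set α} {t : Set β} (hg : StrictMonoOn g s) (hmaps : MapsTo g s t)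
    (hsurj : SurjOn g s t) : AntitoneOn (f ∘ g) s ↔ AntitoneOn f t :=
  monotoneOn_toDual_comp_iff.symm.trans
    ((hg.monotoneOn_comp_iff hmaps hsurj).trans monotoneOn_toDual_comp_iff)

theorem ContDiffOn.hasDerivAt_deriv {f : ℝ → ℝ} {s : Set ℝ} {x : ℝ} (hf : ContDiffOn ℝ 2 f s)
    (hs : IsOpen s) (hx : x ∈ s) : HasDerivAt (deriv f) (deriv (deriv f) x) x :=
  (((hf.deriv_of_isOpen hs (by norm_num)).differentiableOn one_ne_zero x hx).differentiableAt
    (hs.mem_nhds hx)).hasDerivAt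

theorem strictAntiOn_Icc_of_hasDerivAt_neg {f f' : ℝ → ℝ} {a b : ℝ}
    (hf : ∀ x ∈ Icc a b, HasDerivAt f (f' x) x) (hf' : ∀ x ∈ Icc a b, f' x < 0) :
    StrictAntiOn f (Icc a b) :=
  strictAntiOn_of_hasDerivWithinAt_neg (convex_Icc a b)
    (fun x hx => (hf x hx).continuousAt.continuousWithinAt)
    (fun x hx => (hf x (interior_subset hx)).hasDerivWithinAt)
    (fun x hx => hf' x (interior_subset hx))

theorem strictMonoOn_Icc_of_hasDerivAt_pos {f f' : ℝ → ℝ} {a b : ℝ}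
    (hf : ∀ x ∈ Icc a b, HasDerivAt f (f' x) x) (hf' : ∀ x ∈ Icc a b, 0 < f' x) :
    StrictMonoOn f (Icc a b) :=
  strictMonoOn_of_hasDerivWithinAt_pos (convex_Icc a b)
    (fun x hx => (hf x hx).continuousAt.continuousWithinAt)
    (fun x hx => (hf x (interior_subset hx)).hasDerivWithinAt)
    (fun x hx => hf' x (interior_subset hx))

theorem concaveOn_Icc_iff_antitoneOn_deriv {f : ℝ → ℝ} {a b : ℝ} (hc : ContinuousOn f (Icc a b))
    (hd : DifferentiableOn ℝ f (Ioo a b)) :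
    ConcaveOn ℝ (Icc a b) f ↔ AntitoneOn (deriv f) (Ioo a b) := by
  refine ⟨fun h => (h.subset Ioo_subset_Icc_self (convex_Ioo a b)).antitoneOn_deriv
    fun x hx => hd.differentiableAt (isOpen_Ioo.mem_nhds hx), fun h => ?_⟩
  rw [← interior_Icc] at hd h
  exact h.concaveOn_of_deriv (convex_Icc a b) hc hd

theorem convexOn_Icc_iff_monotoneOn_deriv {f : ℝ → ℝ} {a b : ℝ} (hc : ContinuousOn f (Icc a b))
    (hd : DifferentiableOn ℝ f (Ioo a b)) :
    ConvexOn ℝ (Icc a b) f ↔ MonotoneOn (deriv f) (Ioo a b) := by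
  refine ⟨fun h => (h.subset Ioo_subset_Icc_self (convex_Ioo a b)).monotoneOn_deriv
    fun x hx => hd.differentiableAt (isOpen_Ioo.mem_nhds hx), fun h => ?_⟩
  rw [← interior_Icc] at hd h
  exact h.convexOn_of_deriv (convex_Icc a b) hc hd

section Reparametrized

variable {W E g : ℝ → ℝ} {a b c d : ℝ}

theorem eqOn_deriv_comp_of_hasDerivAt (hd : ∀ q ∈ Ioo c d, HasDerivAt W (E q) (g q)) :
    EqOn E (deriv W ∘ g) (Ioo c d) := fun q hq => (hd q hq).deriv.symm

theorem differentiableOn_of_hasDerivAt_comp (hsurj : SurjOn g (Ioo c d) (Ioo a b))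
    (hd : ∀ q ∈ Ioo c d, HasDerivAt W (E q) (g q)) : DifferentiableOn ℝ W (Ioo a b) := by
  intro x hx
  obtain ⟨q, hq, rfl⟩ := hsurj hx
  exact (hd q hq).differentiableAt.differentiableWithinAt

theorem concaveOn_Icc_iff_of_hasDerivAt_comp (hW : ContinuousOn W (Icc a b))
    (hg : StrictMonoOn g (Ioo c d)) (hmaps : MapsTo g (Ioo c d) (Ioo a b))
    (hsurj : SurjOn g (Ioo c d) (Ioo a b)) (hd : ∀ q ∈ Ioo c d, HasDerivAt W (E q) (g q)) :
    ConcaveOn ℝ (Icc a b) W ↔ AntitoneOn E (Ioo c d) := by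
  rw [concaveOn_Icc_iff_antitoneOn_deriv hW (differentiableOn_of_hasDerivAt_comp hsurj hd),
    (eqOn_deriv_comp_of_hasDerivAt hd).congr_antitoneOn, hg.antitoneOn_comp_iff hmaps hsurj]

theorem convexOn_Icc_iff_of_hasDerivAt_comp (hW : ContinuousOn W (Icc a b))
    (hg : StrictMonoOn g (Ioo c d)) (hmaps : MapsTo g (Ioo c d) (Ioo a b))
    (hsurj : SurjOn g (Ioo c d) (Ioo a b)) (hd : ∀ q ∈ Ioo c d, HasDerivAt W (E q) (g q)) :
    ConvexOn ℝ (Icc a b) W ↔ MonotoneOn E (Ioo c d) := by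
  rw [convexOn_Icc_iff_monotoneOn_deriv hW (differentiableOn_of_hasDerivAt_comp hsurj hd),
    (eqOn_deriv_comp_of_hasDerivAt hd).congr_monotoneOn, hg.monotoneOn_comp_iff hmaps hsurj]

end Reparametrized

/-- The weight `μ` for which `(1 - μ) * a q + μ * b q = 0`. -/
noncomputable def balancingWeight (a b : ℝ → ℝ) (q : ℝ) : ℝ := a q / (a q - b q)

def IsPooledPrice (a b p : ℝ → ℝ) (pL pH : ℝ) : Prop :=
  ∀ μ ∈ Icc (0 : ℝ) 1, p μ ∈ Icc pL pH ∧ (1 - μ) * a (p μ) + μ * b (p μ) = 0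

/-- `a`, `b` play the roles of `R_L'`, `R_H'` on `[p_L*, p_H*]`, with derivatives `a'`, `b'`. -/
structure MarginalRevenues (a b a' b' : ℝ → ℝ) (pL pH : ℝ) : Prop where
  lt : pL < pH
  hasDerivAt_low : ∀ q ∈ Icc pL pH, HasDerivAt a (a' q) q
  hasDerivAt_high : ∀ q ∈ Icc pL pH, HasDerivAt b (b' q) q
  deriv_low_neg : ∀ q ∈ Icc pL pH, a' q < 0
  deriv_high_neg : ∀ q ∈ Icc pL pH, b' q < 0
  low_zero : a pL = 0
  high_zero : b pH = 0

namespace MarginalRevenues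

variable {a b a' b' : ℝ → ℝ} {pL pH q : ℝ}

theorem of_contDiffOn {RL RH : ℝ → ℝ} {I : Set ℝ} (hI : IsOpen I) (hsub : Icc pL pH ⊆ I)
    (hlt : pL < pH) (hRL : ContDiffOn ℝ 2 RL I) (hRH : ContDiffOn ℝ 2 RH I)
    (hRL'' : ∀ q ∈ I, deriv (deriv RL) q < 0) (hRH'' : ∀ q ∈ I, deriv (deriv RH) q < 0)
    (hRL' : deriv RL pL = 0) (hRH' : deriv RH pH = 0) :
    MarginalRevenues (deriv RL) (deriv RH) (deriv (deriv RL)) (deriv (deriv RH)) pL pH where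
  lt := hlt
  hasDerivAt_low _ hq := hRL.hasDerivAt_deriv hI (hsub hq)
  hasDerivAt_high _ hq := hRH.hasDerivAt_deriv hI (hsub hq)
  deriv_low_neg _ hq := hRL'' _ (hsub hq)
  deriv_high_neg _ hq := hRH'' _ (hsub hq)
  low_zero := hRL'
  high_zero := hRH'

theorem low_neg (h : MarginalRevenues a b a' b' pL pH) (hq : q ∈ Ioc pL pH) : a q < 0 :=
  h.low_zero ▸ strictAntiOn_Icc_of_hasDerivAt_neg h.hasDerivAt_low h.deriv_low_neg
    (left_mem_Icc.2 h.lt.le) (Ioc_subset_Icc_self hq) hq.1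

theorem high_pos (h : MarginalRevenues a b a' b' pL pH) (hq : q ∈ Ico pL pH) : 0 < b q :=
  h.high_zero ▸ strictAntiOn_Icc_of_hasDerivAt_neg h.hasDerivAt_high h.deriv_high_neg
    (Ico_subset_Icc_self hq) (right_mem_Icc.2 h.lt.le) hq.2

theorem high_nonneg (h : MarginalRevenues a b a' b' pL pH) (hq : q ∈ Icc pL pH) : 0 ≤ b q := by
  rcases hq.2.eq_or_lt with rfl | hlt
  · exact h.high_zero.ge
  · exact (h.high_pos ⟨hq.1, hlt⟩).le

theorem sub_neg (h : MarginalRevenues a b a' b' pL pH) (hq : q ∈ Icc pL pH) : a q - b q < 0 := by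
  rcases hq.1.eq_or_lt with rfl | hlt
  · linarith [h.low_zero, h.high_pos ⟨le_rfl, h.lt⟩]
  · linarith [h.low_neg ⟨hlt, hq.2⟩, h.high_nonneg hq]

theorem wronskian_pos (h : MarginalRevenues a b a' b' pL pH) (hq : q ∈ Icc pL pH) :
    0 < a q * b' q - a' q * b q := by
  have hA := h.deriv_low_neg q hq
  have hB := h.deriv_high_neg q hq
  rcases hq.1.eq_or_lt with rfl | hlt
  · nlinarith [h.low_zero, h.high_pos ⟨le_rfl, h.lt⟩]
  · nlinarith [h.low_neg ⟨hlt, hq.2⟩, h.high_nonneg hq]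

theorem hasDerivAt_balancingWeight (h : MarginalRevenues a b a' b' pL pH) (hq : q ∈ Icc pL pH) :
    HasDerivAt (balancingWeight a b) ((a q * b' q - a' q * b q) / (a q - b q) ^ 2) q := by
  refine ((h.hasDerivAt_low q hq).div ((h.hasDerivAt_low q hq).sub (h.hasDerivAt_high q hq))
    (h.sub_neg hq).ne).congr_deriv ?_
  simp only [Pi.sub_apply]
  ring

theorem deriv_balancingWeight_pos (h : MarginalRevenues a b a' b' pL pH) (hq : q ∈ Icc pL pH) :
    0 < (a q * b' q - a' q * b q) / (a q - b q) ^ 2 :=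
  div_pos (h.wronskian_pos hq) (sq_pos_of_neg (h.sub_neg hq))

theorem strictMonoOn_balancingWeight (h : MarginalRevenues a b a' b' pL pH) :
    StrictMonoOn (balancingWeight a b) (Icc pL pH) :=
  strictMonoOn_Icc_of_hasDerivAt_pos (fun _ hq => h.hasDerivAt_balancingWeight hq)
    fun _ hq => h.deriv_balancingWeight_pos hq

theorem balancingWeight_low (h : MarginalRevenues a b a' b' pL pH) :
    balancingWeight a b pL = 0 := by
  simp [balancingWeight, h.low_zero]

theorem balancingWeight_high (h : MarginalRevenues a b a' b' pL pH) :
    balancingWeight a b pH = 1 := by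
  simpa [balancingWeight, h.high_zero] using div_self (h.low_neg ⟨h.lt, le_rfl⟩).ne

theorem mapsTo_balancingWeight_Icc (h : MarginalRevenues a b a' b' pL pH) :
    MapsTo (balancingWeight a b) (Icc pL pH) (Icc 0 1) := by
  simpa only [h.balancingWeight_low, h.balancingWeight_high] using
    h.strictMonoOn_balancingWeight.monotoneOn.mapsTo_Icc

theorem mapsTo_balancingWeight_Ioo (h : MarginalRevenues a b a' b' pL pH) :
    MapsTo (balancingWeight a b) (Ioo pL pH) (Ioo 0 1) := by
  simpa only [h.balancingWeight_low, h.balancingWeight_high] using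
    h.strictMonoOn_balancingWeight.mapsTo_Ioo

theorem balancingWeight_eq (h : MarginalRevenues a b a' b' pL pH) {μ : ℝ} (hq : q ∈ Icc pL pH)
    (hμ : (1 - μ) * a q + μ * b q = 0) : balancingWeight a b q = μ := by
  rw [balancingWeight, div_eq_iff (h.sub_neg hq).ne]
  linarith

theorem invOn_balancingWeight (h : MarginalRevenues a b a' b' pL pH) {p : ℝ → ℝ}
    (hp : IsPooledPrice a b p pL pH) : InvOn (balancingWeight a b) p (Icc 0 1) (Icc pL pH) := by
  have hleft : LeftInvOn (balancingWeight a b) p (Icc 0 1) := fun μ hμ =>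
    h.balancingWeight_eq (hp μ hμ).1 (hp μ hμ).2
  exact ⟨hleft, h.strictMonoOn_balancingWeight.injOn.rightInvOn_of_leftInvOn hleft
    h.mapsTo_balancingWeight_Icc fun μ hμ => (hp μ hμ).1⟩

theorem continuousOn_pooledPrice (h : MarginalRevenues a b a' b' pL pH) {p : ℝ → ℝ}
    (hp : IsPooledPrice a b p pL pH) : ContinuousOn p (Icc 0 1) := by
  have hmaps : MapsTo p (Icc 0 1) (Icc pL pH) := fun μ hμ => (hp μ hμ).1
  have hinv := h.invOn_balancingWeight hp
  exact (h.strictMonoOn_balancingWeight.of_leftInvOn hmaps hinv.1).continuousOn_Icc_of_surjOn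
    hmaps (hinv.2.surjOn h.mapsTo_balancingWeight_Icc)

theorem hasDerivAt_pooledPrice (h : MarginalRevenues a b a' b' pL pH) {p : ℝ → ℝ}
    (hp : IsPooledPrice a b p pL pH) (hq : q ∈ Ioo pL pH) :
    HasDerivAt p ((a q * b' q - a' q * b q) / (a q - b q) ^ 2)⁻¹ (balancingWeight a b q) := by
  have hq' := Ioo_subset_Icc_self hq
  have hinv := h.invOn_balancingWeight hp
  have hμ := h.mapsTo_balancingWeight_Ioo hq
  have hnhds : Icc 0 1 ∈ 𝓝 (balancingWeight a b q) := Icc_mem_nhds hμ.1 hμ.2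
  refine HasDerivAt.of_local_left_inverse (f := balancingWeight a b)
    ((h.continuousOn_pooledPrice hp).continuousAt hnhds) ?_ (h.deriv_balancingWeight_pos hq').ne' ?_
  · rw [hinv.2 hq']
    exact h.hasDerivAt_balancingWeight hq'
  · filter_upwards [hnhds] with ν hν using hinv.1 hν

theorem surjOn_balancingWeight_Ioo (h : MarginalRevenues a b a' b' pL pH) {p : ℝ → ℝ}
    (hp : IsPooledPrice a b p pL pH) : SurjOn (balancingWeight a b) (Ioo pL pH) (Ioo 0 1) := by
  intro μ hμ
  obtain ⟨q, hq, rfl⟩ :=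
    (h.invOn_balancingWeight hp).1.surjOn (fun μ hμ => (hp μ hμ).1) (Ioo_subset_Icc_self hμ)
  refine ⟨q, ⟨hq.1.lt_of_ne ?_, hq.2.lt_of_ne ?_⟩, rfl⟩
  · rintro rfl
    exact hμ.1.ne' h.balancingWeight_low
  · rintro rfl
    exact hμ.2.ne h.balancingWeight_high

end MarginalRevenues

section Mixture

variable {VL VH p : ℝ → ℝ}

theorem continuousOn_mixture {s t : Set ℝ} (hp : ContinuousOn p s) (hmaps : MapsTo p s t)
    (hL : ContinuousOn VL t) (hH : ContinuousOn VH t) :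
    ContinuousOn (fun μ => (1 - μ) * VL (p μ) + μ * VH (p μ)) s :=
  ((continuousOn_const.sub continuousOn_id).mul (hL.comp hp hmaps)).add
    (continuousOn_id.mul (hH.comp hp hmaps))

theorem hasDerivAt_mixture {vL vH p' μ q : ℝ} (hp : HasDerivAt p p' μ) (hpμ : p μ = q)
    (hL : HasDerivAt VL vL q) (hH : HasDerivAt VH vH q) :
    HasDerivAt (fun μ => (1 - μ) * VL (p μ) + μ * VH (p μ))
      (VH q - VL q + ((1 - μ) * vL + μ * vH) * p') μ := by
  subst hpμ
  have := (((hasDerivAt_id μ).const_sub 1).mul (hL.comp μ hp)).add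
    ((hasDerivAt_id μ).mul (hH.comp μ hp))
  exact this.congr_deriv (by simp only [Function.comp_apply, id]; ring)

end Mixture

/-- With `a, b, A, B = R_L', R_H', R_L'', R_H''` at `q` and `μ = μ(q)`, this turns
`((1 - μ) V_L' + μ V_H') p'(μ)` into the last summand of `E_α(q)`. -/
theorem mixture_mul_inv_eq {a b A B x y : ℝ} (hab : a - b ≠ 0) (hb : b ≠ 0) :
    ((1 - a / (a - b)) * x + a / (a - b) * y) * ((a * B - A * b) / (a - b) ^ 2)⁻¹ =
      (x - a / b * y) / (A - a / b * B) * (a - b) := by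
  have hden : A - a / b * B = -(a * B - A * b) / b := by
    field_simp
    ring
  rw [hden]
  field_simp
  ring

theorem stmt_2_general
    (I : Set ℝ) (DL DH RL RH : ℝ → ℝ) (pLs pHs : ℝ)
    (hIopen : IsOpen I) (hIconv : Convex ℝ I)
    (hRL : RL = fun q => q * DL q) (hRH : RH = fun q => q * DH q)
    (hDL : ContDiffOn ℝ 2 DL I) (hDH : ContDiffOn ℝ 2 DH I)
    (hRL'' : ∀ q ∈ I, deriv (deriv RL) q < 0) (hRH'' : ∀ q ∈ I, deriv (deriv RH) q < 0)
    (hpLs : pLs ∈ I) (hpHs : pHs ∈ I) (hlt : pLs < pHs)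
    (hRL' : deriv RL pLs = 0) (hRH' : deriv RH pHs = 0)
    (p : ℝ → ℝ)
    (hp : ∀ μ ∈ Set.Icc (0:ℝ) 1, p μ ∈ Set.Icc pLs pHs ∧
      (1 - μ) * deriv RL (p μ) + μ * deriv RH (p μ) = 0)
    (α : ℝ)
    (CSL CSH VL VH : ℝ → ℝ)
    (hCSL : ∀ q ∈ I, HasDerivAt CSL (-(DL q)) q)
    (hCSH : ∀ q ∈ I, HasDerivAt CSH (-(DH q)) q)
    (hVL : VL = fun q => α * CSL q + (1 - α) * RL q)
    (hVH : VH = fun q => α * CSH q + (1 - α) * RH q)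
    (W : ℝ → ℝ)
    (hW : W = fun μ => (1 - μ) * VL (p μ) + μ * VH (p μ))
    (E : ℝ → ℝ)
    (hE : ∀ q ∈ Set.Ioo pLs pHs, E q =
      VH q - VL q +
        (deriv VL q - (deriv RL q / deriv RH q) * deriv VH q) /
          (deriv (deriv RL) q - (deriv RL q / deriv RH q) * deriv (deriv RH) q) *
          (deriv RL q - deriv RH q)) :
    (ConcaveOn ℝ (Set.Icc (0:ℝ) 1) W ↔ AntitoneOn E (Set.Ioo pLs pHs)) ∧
    (ConvexOn ℝ (Set.Icc (0:ℝ) 1) W ↔ MonotoneOn E (Set.Ioo pLs pHs)) := by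
  have hIcc : Icc pLs pHs ⊆ I := hIconv.ordConnected.out hpLs hpHs
  have hRL2 : ContDiffOn ℝ 2 RL I := hRL ▸ contDiffOn_id.mul hDL
  have hRH2 : ContDiffOn ℝ 2 RH I := hRH ▸ contDiffOn_id.mul hDH
  have hMR := MarginalRevenues.of_contDiffOn hIopen hIcc hlt hRL2 hRH2 hRL'' hRH'' hRL' hRH'
  have hV : ∀ q ∈ I, DifferentiableAt ℝ VL q ∧ DifferentiableAt ℝ VH q := by
    intro q hq
    have := (hRL2.differentiableOn two_ne_zero q hq).differentiableAt (hIopen.mem_nhds hq)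
    have := (hRH2.differentiableOn two_ne_zero q hq).differentiableAt (hIopen.mem_nhds hq)
    have := (hCSL q hq).differentiableAt
    have := (hCSH q hq).differentiableAt
    subst hVL hVH
    constructor <;> fun_prop
  have hWc : ContinuousOn W (Icc 0 1) := hW ▸ continuousOn_mixture
    (hMR.continuousOn_pooledPrice hp) (fun μ hμ => hIcc (hp μ hμ).1)
    (fun q hq => (hV q hq).1.continuousAt.continuousWithinAt)
    (fun q hq => (hV q hq).2.continuousAt.continuousWithinAt)
  have hWd : ∀ q ∈ Ioo pLs pHs,
      HasDerivAt W (E q) (balancingWeight (deriv RL) (deriv RH) q) := by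
    intro q hq
    have hq' := Ioo_subset_Icc_self hq
    rw [hW, hE q hq, balancingWeight, ← mixture_mul_inv_eq (hMR.sub_neg hq').ne
      (hMR.high_pos (Ioo_subset_Ico_self hq)).ne']
    exact hasDerivAt_mixture (hMR.hasDerivAt_pooledPrice hp hq)
      ((hMR.invOn_balancingWeight hp).2 hq') (hV q (hIcc hq')).1.hasDerivAt
      (hV q (hIcc hq')).2.hasDerivAt
  have hmono := hMR.strictMonoOn_balancingWeight.mono Ioo_subset_Icc_self
  exact ⟨concaveOn_Icc_iff_of_hasDerivAt_comp hWc hmono hMR.mapsTo_balancingWeight_Ioo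
      (hMR.surjOn_balancingWeight_Ioo hp) hWd,
    convexOn_Icc_iff_of_hasDerivAt_comp hWc hmono hMR.mapsTo_balancingWeight_Ioo
      (hMR.surjOn_balancingWeight_Ioo hp) hWd⟩

/-- (Theorem 1(ii), value-function form.) In the binary monopoly model,
for every `α ∈ (0,1]`: the value function `W^α` is concave on `[0,1]` iff the marginal
expression `E_α` is nonincreasing on `(p_L*, p_H*)`, and convex iff `E_α` is nondecreasing. -/
theorem stmt_2
    (I : Set ℝ) (DL DH RL RH : ℝ → ℝ) (pLs pHs : ℝ)
    (hIopen : IsOpen I) (hIconv : Convex ℝ I) (hIpos : I ⊆ Set.Ioi (0:ℝ))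
    (hRL : RL = fun q => q * DL q) (hRH : RH = fun q => q * DH q)
    (hDL : ContDiffOn ℝ 2 DL I) (hDH : ContDiffOn ℝ 2 DH I)
    (hDLpos : ∀ q ∈ I, 0 < DL q) (hDHpos : ∀ q ∈ I, 0 < DH q)
    (hDL' : ∀ q ∈ I, deriv DL q < 0) (hDH' : ∀ q ∈ I, deriv DH q < 0)
    (hRL'' : ∀ q ∈ I, deriv (deriv RL) q < 0) (hRH'' : ∀ q ∈ I, deriv (deriv RH) q < 0)
    (hpLs : pLs ∈ I) (hpHs : pHs ∈ I) (hlt : pLs < pHs)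
    (hRL' : deriv RL pLs = 0) (hRH' : deriv RH pHs = 0)
    (p : ℝ → ℝ)
    (hp : ∀ μ ∈ Set.Icc (0:ℝ) 1, p μ ∈ Set.Icc pLs pHs ∧
      (1 - μ) * deriv RL (p μ) + μ * deriv RH (p μ) = 0)
    (α : ℝ) (hα : α ∈ Set.Ioc (0:ℝ) 1)
    (CSL CSH VL VH : ℝ → ℝ)
    (hCSL : ∀ q ∈ I, HasDerivAt CSL (-(DL q)) q)
    (hCSH : ∀ q ∈ I, HasDerivAt CSH (-(DH q)) q)
    (hVL : VL = fun q => α * CSL q + (1 - α) * RL q)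
    (hVH : VH = fun q => α * CSH q + (1 - α) * RH q)
    (W : ℝ → ℝ)
    (hW : W = fun μ => (1 - μ) * VL (p μ) + μ * VH (p μ))
    (E : ℝ → ℝ)
    (hE : ∀ q ∈ Set.Ioo pLs pHs, E q =
      VH q - VL q +
        (deriv VL q - (deriv RL q / deriv RH q) * deriv VH q) /
          (deriv (deriv RL) q - (deriv RL q / deriv RH q) * deriv (deriv RH) q) *
          (deriv RL q - deriv RH q)) :
    (ConcaveOn ℝ (Set.Icc (0:ℝ) 1) W ↔ AntitoneOn E (Set.Ioo pLs pHs)) ∧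
    (ConvexOn ℝ (Set.Icc (0:ℝ) 1) W ↔ MonotoneOn E (Set.Ioo pLs pHs)) :=
  stmt_2_general I DL DH RL RH pLs pHs hIopen hIconv hRL hRH hDL hDH hRL'' hRH'' hpLs hpHs hlt hRL'
    hRH' p hp α CSL CSH VL VH hCSL hCSH hVL hVH W hW E hE
end

section
/- (Corollary 1: monotonicity in α.) In the binary monopoly model: if 0 < α' ≤ α ≤ 1 and the value function W^α is convex on [0,1], then W^{α'} is convex on [0,1]; and if 0 < α ≤ α' ≤ 1 and W^α is concave on [0,1], then W^{α'} is concave on [0,1]. -/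
/-- (Corollary 1: monotonicity in `α`.) In the binary monopoly model:
if `0 < α' ≤ α ≤ 1` and `W^α` is convex on `[0,1]` then `W^{α'}` is convex on `[0,1]`;
if `0 < α ≤ α' ≤ 1` and `W^α` is concave on `[0,1]` then `W^{α'}` is concave on `[0,1]`. -/
theorem stmt_4
    (I : Set ℝ) (DL DH RL RH : ℝ → ℝ) (pLs pHs : ℝ)
    (hIopen : IsOpen I) (hIconv : Convex ℝ I) (hIpos : I ⊆ Set.Ioi (0:ℝ))
    (hRL : RL = fun q => q * DL q) (hRH : RH = fun q => q * DH q)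
    (hDL : ContDiffOn ℝ 2 DL I) (hDH : ContDiffOn ℝ 2 DH I)
    (hDLpos : ∀ q ∈ I, 0 < DL q) (hDHpos : ∀ q ∈ I, 0 < DH q)
    (hDL' : ∀ q ∈ I, deriv DL q < 0) (hDH' : ∀ q ∈ I, deriv DH q < 0)
    (hRL'' : ∀ q ∈ I, deriv (deriv RL) q < 0) (hRH'' : ∀ q ∈ I, deriv (deriv RH) q < 0)
    (hpLs : pLs ∈ I) (hpHs : pHs ∈ I) (hlt : pLs < pHs)
    (hRL' : deriv RL pLs = 0) (hRH' : deriv RH pHs = 0)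
    (p : ℝ → ℝ)
    (hp : ∀ μ ∈ Set.Icc (0:ℝ) 1, p μ ∈ Set.Icc pLs pHs ∧
      (1 - μ) * deriv RL (p μ) + μ * deriv RH (p μ) = 0)
    (CSL CSH : ℝ → ℝ)
    (hCSL : ∀ q ∈ I, HasDerivAt CSL (-(DL q)) q)
    (hCSH : ∀ q ∈ I, HasDerivAt CSH (-(DH q)) q)
    (W : ℝ → ℝ → ℝ)
    (hW : ∀ α : ℝ, W α = fun μ =>
      (1 - μ) * (α * CSL (p μ) + (1 - α) * RL (p μ)) +
        μ * (α * CSH (p μ) + (1 - α) * RH (p μ))) :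
    (∀ α α' : ℝ, 0 < α' → α' ≤ α → α ≤ 1 →
      ConvexOn ℝ (Set.Icc (0:ℝ) 1) (W α) → ConvexOn ℝ (Set.Icc (0:ℝ) 1) (W α')) ∧
    (∀ α α' : ℝ, 0 < α → α ≤ α' → α' ≤ 1 →
      ConcaveOn ℝ (Set.Icc (0:ℝ) 1) (W α) → ConcaveOn ℝ (Set.Icc (0:ℝ) 1) (W α')) := by
  have hIcc : Set.Icc pLs pHs ⊆ I := fun x hx => hIconv.ordConnected.out hpLs hpHs hx
  -- smoothness of revenue
  have hRLc2 : ContDiffOn ℝ 2 RL I := by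
    rw [hRL]; exact contDiffOn_id.mul hDL
  have hRHc2 : ContDiffOn ℝ 2 RH I := by
    rw [hRH]; exact contDiffOn_id.mul hDH
  have hRLd : ∀ q ∈ I, DifferentiableAt ℝ RL q := fun q hq =>
    (hRLc2.differentiableOn (by norm_num)).differentiableAt (hIopen.mem_nhds hq)
  have hRHd : ∀ q ∈ I, DifferentiableAt ℝ RH q := fun q hq =>
    (hRHc2.differentiableOn (by norm_num)).differentiableAt (hIopen.mem_nhds hq)
  have hRL'c : ContDiffOn ℝ 1 (deriv RL) I :=
    hRLc2.deriv_of_isOpen hIopen (m := 1) (by norm_num)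
  have hRH'c : ContDiffOn ℝ 1 (deriv RH) I :=
    hRHc2.deriv_of_isOpen hIopen (m := 1) (by norm_num)
  have hRL'anti : StrictAntiOn (deriv RL) I :=
    strictAntiOn_of_deriv_neg hIconv hRL'c.continuousOn
      (fun x hx => hRL'' x (by rwa [hIopen.interior_eq] at hx))
  have hRH'anti : StrictAntiOn (deriv RH) I :=
    strictAntiOn_of_deriv_neg hIconv hRH'c.continuousOn
      (fun x hx => hRH'' x (by rwa [hIopen.interior_eq] at hx))
  -- maximality of p μ
  have hmax : ∀ μ ∈ Set.Icc (0:ℝ) 1, ∀ q ∈ Set.Icc pLs pHs,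
      (1-μ) * RL q + μ * RH q ≤ (1-μ) * RL (p μ) + μ * RH (p μ) := by
    intro μ hμ q hq
    obtain ⟨hpmem, hzero⟩ := hp μ hμ
    have hμ0 := hμ.1; have hμ1 := hμ.2
    set c := p μ with hc
    set g : ℝ → ℝ := fun x => (1-μ) * RL x + μ * RH x with hg
    have hgd : ∀ x ∈ I, HasDerivAt g ((1-μ) * deriv RL x + μ * deriv RH x) x := by
      intro x hx
      exact ((hRLd x hx).hasDerivAt.const_mul _).add ((hRHd x hx).hasDerivAt.const_mul _)
    have hhanti : ∀ x ∈ I, ∀ y ∈ I, x < y →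
        (1-μ)*deriv RL y + μ*deriv RH y < (1-μ)*deriv RL x + μ*deriv RH x := by
      intro x hx y hy hxy
      have h1 := hRL'anti hx hy hxy
      have h2 := hRH'anti hx hy hxy
      rcases eq_or_lt_of_le hμ0 with h | h
      · rw [← h]; simpa using h1
      · have h3 : 0 < μ * (deriv RH x - deriv RH y) := mul_pos h (sub_pos.mpr h2)
        nlinarith [mul_nonneg (sub_nonneg.mpr hμ1) (sub_pos.mpr h1).le]
    have hcI : c ∈ I := hIcc hpmem
    have hgc : ContinuousOn g (Set.Icc pLs pHs) := fun x hx =>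
      ((hgd x (hIcc hx)).continuousAt.continuousWithinAt)
    rcases le_or_gt q c with hqc | hqc
    · have hmono : MonotoneOn g (Set.Icc pLs c) := by
        apply monotoneOn_of_deriv_nonneg (convex_Icc _ _)
          (hgc.mono (Set.Icc_subset_Icc_right hpmem.2))
        · intro x hx
          rw [interior_Icc] at hx
          have hxI : x ∈ I := hIcc ⟨hx.1.le, hx.2.le.trans hpmem.2⟩
          exact (hgd x hxI).differentiableAt.differentiableWithinAt
        · intro x hx
          rw [interior_Icc] at hx
          have hxI : x ∈ I := hIcc ⟨hx.1.le, hx.2.le.trans hpmem.2⟩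
          rw [(hgd x hxI).deriv]
          have := hhanti x hxI c hcI hx.2
          linarith
      exact hmono ⟨hq.1, hqc⟩ ⟨hpmem.1, le_refl c⟩ hqc
    · have hanti : AntitoneOn g (Set.Icc c pHs) := by
        apply antitoneOn_of_deriv_nonpos (convex_Icc _ _)
          (hgc.mono (Set.Icc_subset_Icc_left hpmem.1))
        · intro x hx
          rw [interior_Icc] at hx
          have hxI : x ∈ I := hIcc ⟨hpmem.1.trans hx.1.le, hx.2.le⟩
          exact (hgd x hxI).differentiableAt.differentiableWithinAt
        · intro x hx
          rw [interior_Icc] at hx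
          have hxI : x ∈ I := hIcc ⟨hpmem.1.trans hx.1.le, hx.2.le⟩
          rw [(hgd x hxI).deriv]
          have := hhanti c hcI x hxI hx.1
          linarith
      exact hanti ⟨le_refl c, hpmem.2⟩ ⟨hqc.le, hq.2⟩ hqc.le
  -- convexity of the producer surplus part B
  set B : ℝ → ℝ := fun μ => (1-μ) * RL (p μ) + μ * RH (p μ) with hB
  have hBconv : ConvexOn ℝ (Set.Icc (0:ℝ) 1) B := by
    refine ⟨convex_Icc _ _, ?_⟩
    intro x hx y hy a b ha hb hab
    have hμmem : a • x + b • y ∈ Set.Icc (0:ℝ) 1 := (convex_Icc _ _) hx hy ha hb hab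
    have h1 := hmax x hx (p (a•x+b•y)) (hp _ hμmem).1
    have h2 := hmax y hy (p (a•x+b•y)) (hp _ hμmem).1
    have key : B (a•x+b•y)
        = a * ((1-x)*RL (p (a•x+b•y)) + x * RH (p (a•x+b•y)))
          + b * ((1-y)*RL (p (a•x+b•y)) + y * RH (p (a•x+b•y))) := by
      simp only [hB, smul_eq_mul]
      have hba : a = 1 - b := by linarith
      subst hba; ring
    rw [key]
    have H1 := mul_le_mul_of_nonneg_left h1 ha
    have H2 := mul_le_mul_of_nonneg_left h2 hb
    simp only [smul_eq_mul, hB] at H1 H2 ⊢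
    linarith
  -- decomposition of W
  have hdecomp : ∀ α α' : ℝ, α ≠ 0 →
      W α' = fun μ => (α'/α) * W α μ + ((α - α')/α) * B μ := by
    intro α α' hα
    funext μ
    rw [hW, hW]
    simp only [hB]
    field_simp
    ring
  constructor
  · intro α α' hα' hle hα1 hconv
    have hαpos : (0:ℝ) < α := lt_of_lt_of_le hα' hle
    have h1 : ConvexOn ℝ (Set.Icc (0:ℝ) 1) ((α'/α) • W α) :=
      hconv.smul (by positivity)
    have h2 : ConvexOn ℝ (Set.Icc (0:ℝ) 1) (((α-α')/α) • B) :=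
      hBconv.smul (div_nonneg (by linarith) hαpos.le)
    have h3 := h1.add h2
    rw [hdecomp α α' hαpos.ne']
    have heq : (fun μ => (α'/α) * W α μ + ((α-α')/α) * B μ)
        = ((α'/α) • W α) + (((α-α')/α) • B) := by
      funext μ; simp [smul_eq_mul]
    rw [heq]; exact h3
  · intro α α' hα hle hα1 hconc
    have h1 : ConcaveOn ℝ (Set.Icc (0:ℝ) 1) ((α'/α) • W α) :=
      hconc.smul (div_nonneg (by linarith) hα.le)
    have h2 : ConcaveOn ℝ (Set.Icc (0:ℝ) 1) (-(((α'-α)/α) • B)) :=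
      (hBconv.smul (div_nonneg (by linarith) hα.le)).neg
    have h3 := h1.add h2
    rw [hdecomp α α' hα.ne']
    have heq : (fun μ => (α'/α) * W α μ + ((α-α')/α) * B μ)
        = ((α'/α) • W α) + (-(((α'-α)/α) • B)) := by
      funext μ
      simp only [Pi.add_apply, Pi.neg_apply, Pi.smul_apply, smul_eq_mul]
      ring
    rw [heq]; exact h3
end

section
/- (Corollary 2: sufficient conditions for welfare-monotonicity.) In the binary monopoly model with D_L and D_H three times continuously differentiable, fix α ∈ (0,1]. If the optimal-price function μ ↦ p(μ) is convex on [0,1] and for every p ∈ (p_L*, p_H*) one has (V_L^α)''(p) ≤ 0, (V_H^α)''(p) ≤ 0 and (V_H^α)'(p) ≤ (V_L^α)'(p), then W^α is concave on [0,1]. Symmetrically, if μ ↦ p(μ) is concave on [0,1] and for every p ∈ (p_L*, p_H*) one has (V_L^α)''(p) ≥ 0, (V_H^α)''(p) ≥ 0 and (V_H^α)'(p) ≥ (V_L^α)'(p), then W^α is convex on [0,1]. -/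
/-!
Write `G μ q = (1 - μ) V_L q + μ V_H q`, so that `W μ = G μ (p μ)`. Let `μ = a x + b y` be a
convex combination and `q = p μ`. Adding up the tangent-line bounds of the concave `V_L`, `V_H`
at `q`, evaluated at `p x` and `p y` with weights `a (1 - x), a x, b (1 - y), b y`, gives
  `a W x + b W y ≤ W μ + ∂_q G μ q · (a p x + b p y - q)`
  `                    - a b (p x - p y) (x - y) (V_L' q - V_H' q)`.
By the first-order condition, `∂_q G μ (p μ) = -α ((1 - μ) D_L + μ D_H) ≤ 0`, and `p` is
convex, so the middle term is `≤ 0`. The first-order condition and the strict concavity of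
`R_L`, `R_H` make `p` nondecreasing, so with `V_H' ≤ V_L'` the last term is `≤ 0` too. The
convex case is the concave one applied to `q ↦ -V_i (-q)` and `-p`.
-/

open Set

theorem contDiffOn_succ_of_hasDerivAt {𝕜 F : Type*} [NontriviallyNormedField 𝕜]
    [NormedAddCommGroup F] [NormedSpace 𝕜 F] {U : Set 𝕜} {f f' : 𝕜 → F} {n : ℕ}
    (hU : IsOpen U) (hf : ∀ x ∈ U, HasDerivAt f (f' x) x) (hf' : ContDiffOn 𝕜 n f' U) :
    ContDiffOn 𝕜 (n + 1) f U :=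
  (contDiffOn_succ_iff_deriv_of_isOpen hU).2
    ⟨fun x hx => (hf x hx).differentiableAt.differentiableWithinAt, by simp,
      hf'.congr fun x hx => (hf x hx).deriv⟩

theorem ConvexOn.add_mul_sub_le_of_hasDerivAt {S : Set ℝ} {f : ℝ → ℝ} {f' x y : ℝ}
    (hf : ConvexOn ℝ S f) (hx : x ∈ S) (hy : y ∈ S) (hd : HasDerivAt f f' y) :
    f y + f' * (x - y) ≤ f x := by
  rcases lt_trichotomy x y with hxy | rfl | hxy
  · have h := hf.slope_le_of_hasDerivAt hx hy hxy hd
    rw [slope_def_field, div_le_iff₀ (sub_pos.2 hxy)] at h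
    linarith
  · simp
  · have h := hf.le_slope_of_hasDerivAt hy hx hxy hd
    rw [slope_def_field, le_div_iff₀ (sub_pos.2 hxy)] at h
    linarith

theorem ConcaveOn.le_add_mul_sub_of_hasDerivAt {S : Set ℝ} {f : ℝ → ℝ} {f' x y : ℝ}
    (hf : ConcaveOn ℝ S f) (hx : x ∈ S) (hy : y ∈ S) (hd : HasDerivAt f f' y) :
    f x ≤ f y + f' * (x - y) := by
  have := hf.neg.add_mul_sub_le_of_hasDerivAt hx hy hd.neg
  simp only [Pi.neg_apply] at this
  linarith

theorem ContDiffOn.le_add_deriv_mul_sub_of_deriv2_nonpos {U : Set ℝ} {f : ℝ → ℝ}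
    {c d x y : ℝ} (hU : IsOpen U) (hf : ContDiffOn ℝ 2 f U) (hcd : Icc c d ⊆ U)
    (hf'' : ∀ x ∈ Ioo c d, deriv (deriv f) x ≤ 0) (hx : x ∈ Icc c d) (hy : y ∈ Icc c d) :
    f x ≤ f y + deriv f y * (x - y) := by
  have hd : DifferentiableOn ℝ f U := hf.differentiableOn (by norm_num)
  have hd' : DifferentiableOn ℝ (deriv f) U :=
    (hf.deriv_of_isOpen hU (m := 1) (by norm_num)).differentiableOn (by norm_num)
  have hint : interior (Icc c d) ⊆ U := interior_subset.trans hcd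
  have hconc : ConcaveOn ℝ (Icc c d) f :=
    concaveOn_of_deriv2_nonpos (convex_Icc c d) (hd.continuousOn.mono hcd) (hd.mono hint)
      (hd'.mono hint) (by rw [interior_Icc]; exact hf'')
  exact hconc.le_add_mul_sub_of_hasDerivAt hx hy
    ((hd y (hcd hy)).differentiableAt (hU.mem_nhds (hcd hy))).hasDerivAt

theorem ContDiffOn.add_deriv_mul_sub_le_of_deriv2_nonneg {U : Set ℝ} {f : ℝ → ℝ}
    {c d x y : ℝ} (hU : IsOpen U) (hf : ContDiffOn ℝ 2 f U) (hcd : Icc c d ⊆ U)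
    (hf'' : ∀ x ∈ Ioo c d, 0 ≤ deriv (deriv f) x) (hx : x ∈ Icc c d) (hy : y ∈ Icc c d) :
    f y + deriv f y * (x - y) ≤ f x := by
  have hneg : deriv (-f) = -deriv f := deriv.neg'
  have := ContDiffOn.le_add_deriv_mul_sub_of_deriv2_nonpos (f := -f) hU hf.neg hcd
    (fun x hx => by simpa [hneg, deriv.neg] using hf'' x hx) hx hy
  simp only [hneg, Pi.neg_apply] at this
  linarith

theorem ContDiffOn.strictAntiOn_deriv_of_deriv2_neg {U : Set ℝ} {f : ℝ → ℝ} {c d : ℝ}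
    (hU : IsOpen U) (hf : ContDiffOn ℝ 2 f U) (hcd : Icc c d ⊆ U)
    (hf'' : ∀ x ∈ Ioo c d, deriv (deriv f) x < 0) : StrictAntiOn (deriv f) (Icc c d) :=
  strictAntiOn_of_deriv_neg (convex_Icc c d)
    ((hf.continuousOn_deriv_of_isOpen hU (by norm_num)).mono hcd)
    (by rwa [interior_Icc])

theorem monotoneOn_of_mix_eq_zero {rL rH p : ℝ → ℝ} {a b : ℝ} (hab : a ≤ b)
    (hL : StrictAntiOn rL (Icc a b)) (hH : StrictAntiOn rH (Icc a b))
    (hLa : rL a = 0) (hHb : rH b = 0)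
    (hp : ∀ μ ∈ Icc (0:ℝ) 1, p μ ∈ Icc a b ∧
      (1 - μ) * rL (p μ) + μ * rH (p μ) = 0) :
    MonotoneOn p (Icc 0 1) := by
  intro x hx y hy hxy
  by_contra! hlt
  obtain ⟨hpx, hx0⟩ := hp x hx
  obtain ⟨hpy, hy0⟩ := hp y hy
  have hLx : rL (p x) ≤ 0 := hLa ▸ hL.antitoneOn ⟨le_rfl, hab⟩ hpx hpx.1
  have hHx : 0 ≤ rH (p x) := hHb ▸ hH.antitoneOn hpx ⟨hab, le_rfl⟩ hpx.2
  have hLlt := hL hpy hpx hlt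
  have hHlt := hH hpy hpx hlt
  -- the `y`-mixture vanishes at `p y < p x`, so it is negative at `p x`, where `rL ≤ 0 ≤ rH`
  have hge : 0 ≤ (1 - y) * rL (p x) + y * rH (p x) := by
    nlinarith [mul_nonneg (sub_nonneg.2 hxy) (sub_nonneg.2 (hLx.trans hHx))]
  have hlt' : (1 - y) * rL (p x) + y * rH (p x) < 0 := by
    nlinarith [mul_nonneg (sub_nonneg.2 hy.2) (sub_pos.2 hLlt).le,
      mul_nonneg hy.1 (sub_pos.2 hHlt).le]
  linarith

theorem concaveOn_mix_comp {K : Set ℝ} {f g f' g' p : ℝ → ℝ} (hpK : MapsTo p (Icc 0 1) K)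
    (hf : ∀ x ∈ K, ∀ y ∈ K, f x ≤ f y + f' y * (x - y))
    (hg : ∀ x ∈ K, ∀ y ∈ K, g x ≤ g y + g' y * (x - y))
    (hp : ConvexOn ℝ (Icc 0 1) p)
    (hslope : ∀ μ ∈ Icc (0:ℝ) 1, (1 - μ) * f' (p μ) + μ * g' (p μ) ≤ 0)
    (hcross : ∀ μ ∈ Icc (0:ℝ) 1, ∀ x ∈ Icc (0:ℝ) 1, ∀ y ∈ Icc (0:ℝ) 1,
      0 ≤ (p x - p y) * (x - y) * (f' (p μ) - g' (p μ))) :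
    ConcaveOn ℝ (Icc 0 1) fun μ => (1 - μ) * f (p μ) + μ * g (p μ) := by
  refine ⟨convex_Icc 0 1, fun x hx y hy a b ha hb hab => ?_⟩
  have hμ : a • x + b • y ∈ Icc (0:ℝ) 1 := convex_Icc 0 1 hx hy ha hb hab
  have hJ : p (a • x + b • y) ≤ a • p x + b • p y := hp.2 hx hy ha hb hab
  simp only [smul_eq_mul] at hμ hJ ⊢
  set μ := a * x + b * y
  set q := p μ
  have hq := hpK hμ
  have tfx := mul_le_mul_of_nonneg_left (hf _ (hpK hx) q hq) (mul_nonneg ha (sub_nonneg.2 hx.2))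
  have tgx := mul_le_mul_of_nonneg_left (hg _ (hpK hx) q hq) (mul_nonneg ha hx.1)
  have tfy := mul_le_mul_of_nonneg_left (hf _ (hpK hy) q hq) (mul_nonneg hb (sub_nonneg.2 hy.2))
  have tgy := mul_le_mul_of_nonneg_left (hg _ (hpK hy) q hq) (mul_nonneg hb hy.1)
  have hfirst := mul_nonpos_of_nonpos_of_nonneg (hslope μ hμ) (sub_nonneg.2 hJ)
  have hsecond := mul_nonneg (mul_nonneg ha hb) (hcross μ hμ x hx y hy)
  obtain rfl : b = 1 - a := by linarith
  linear_combination tfx + tgx + tfy + tgy + hfirst + hsecond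

theorem convexOn_mix_comp {K : Set ℝ} {f g f' g' p : ℝ → ℝ} (hpK : MapsTo p (Icc 0 1) K)
    (hf : ∀ x ∈ K, ∀ y ∈ K, f y + f' y * (x - y) ≤ f x)
    (hg : ∀ x ∈ K, ∀ y ∈ K, g y + g' y * (x - y) ≤ g x)
    (hp : ConcaveOn ℝ (Icc 0 1) p)
    (hslope : ∀ μ ∈ Icc (0:ℝ) 1, (1 - μ) * f' (p μ) + μ * g' (p μ) ≤ 0)
    (hcross : ∀ μ ∈ Icc (0:ℝ) 1, ∀ x ∈ Icc (0:ℝ) 1, ∀ y ∈ Icc (0:ℝ) 1,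
      (p x - p y) * (x - y) * (f' (p μ) - g' (p μ)) ≤ 0) :
    ConvexOn ℝ (Icc 0 1) fun μ => (1 - μ) * f (p μ) + μ * g (p μ) := by
  have h := concaveOn_mix_comp (K := -K) (f := fun q => -f (-q)) (g := fun q => -g (-q))
    (f' := fun q => f' (-q)) (g' := fun q => g' (-q)) (p := fun μ => -p μ)
    (fun μ hμ => neg_mem_neg.2 (hpK hμ))
    (fun x hx y hy => by linarith [hf _ hx _ hy])
    (fun x hx y hy => by linarith [hg _ hx _ hy])
    hp.neg (by simpa using hslope)
    (fun μ hμ x hx y hy => by simp only [neg_neg]; nlinarith [hcross μ hμ x hx y hy])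
  exact h.neg.congr fun μ _ => by simp only [Pi.neg_apply, neg_neg]; ring

theorem concaveOn_mix_comp_of_deriv2_nonpos {U : Set ℝ} {f g p : ℝ → ℝ} {c d : ℝ}
    (hU : IsOpen U) (hf : ContDiffOn ℝ 2 f U) (hg : ContDiffOn ℝ 2 g U) (hcd : c < d)
    (hsub : Icc c d ⊆ U) (hpK : MapsTo p (Icc 0 1) (Icc c d)) (hp : ConvexOn ℝ (Icc 0 1) p)
    (hmono : MonotoneOn p (Icc 0 1))
    (hslope : ∀ μ ∈ Icc (0:ℝ) 1, (1 - μ) * deriv f (p μ) + μ * deriv g (p μ) ≤ 0)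
    (hfg : ∀ q ∈ Ioo c d,
      deriv (deriv f) q ≤ 0 ∧ deriv (deriv g) q ≤ 0 ∧ deriv g q ≤ deriv f q) :
    ConcaveOn ℝ (Icc 0 1) fun μ => (1 - μ) * f (p μ) + μ * g (p μ) := by
  have hclosure : closure (Ioo c d) = Icc c d := closure_Ioo hcd.ne
  have hord : ∀ q ∈ Icc c d, deriv g q ≤ deriv f q :=
    hclosure ▸ le_on_closure (fun q hq => (hfg q hq).2.2)
      ((hg.continuousOn_deriv_of_isOpen hU (by norm_num)).mono (hclosure ▸ hsub))
      ((hf.continuousOn_deriv_of_isOpen hU (by norm_num)).mono (hclosure ▸ hsub))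
  exact concaveOn_mix_comp hpK
    (fun _ hx _ hy => hf.le_add_deriv_mul_sub_of_deriv2_nonpos hU hsub (fun q hq => (hfg q hq).1)
      hx hy)
    (fun _ hx _ hy => hg.le_add_deriv_mul_sub_of_deriv2_nonpos hU hsub (fun q hq => (hfg q hq).2.1)
      hx hy)
    hp hslope fun μ hμ x hx y hy =>
      mul_nonneg ((monovaryOn_id_iff.2 hmono).sub_mul_sub_nonneg hy hx)
        (sub_nonneg.2 (hord _ (hpK hμ)))

theorem convexOn_mix_comp_of_deriv2_nonneg {U : Set ℝ} {f g p : ℝ → ℝ} {c d : ℝ}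
    (hU : IsOpen U) (hf : ContDiffOn ℝ 2 f U) (hg : ContDiffOn ℝ 2 g U) (hcd : c < d)
    (hsub : Icc c d ⊆ U) (hpK : MapsTo p (Icc 0 1) (Icc c d)) (hp : ConcaveOn ℝ (Icc 0 1) p)
    (hmono : MonotoneOn p (Icc 0 1))
    (hslope : ∀ μ ∈ Icc (0:ℝ) 1, (1 - μ) * deriv f (p μ) + μ * deriv g (p μ) ≤ 0)
    (hfg : ∀ q ∈ Ioo c d,
      0 ≤ deriv (deriv f) q ∧ 0 ≤ deriv (deriv g) q ∧ deriv f q ≤ deriv g q) :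
    ConvexOn ℝ (Icc 0 1) fun μ => (1 - μ) * f (p μ) + μ * g (p μ) := by
  have hclosure : closure (Ioo c d) = Icc c d := closure_Ioo hcd.ne
  have hord : ∀ q ∈ Icc c d, deriv f q ≤ deriv g q :=
    hclosure ▸ le_on_closure (fun q hq => (hfg q hq).2.2)
      ((hf.continuousOn_deriv_of_isOpen hU (by norm_num)).mono (hclosure ▸ hsub))
      ((hg.continuousOn_deriv_of_isOpen hU (by norm_num)).mono (hclosure ▸ hsub))
  exact convexOn_mix_comp hpK
    (fun _ hx _ hy => hf.add_deriv_mul_sub_le_of_deriv2_nonneg hU hsub (fun q hq => (hfg q hq).1)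
      hx hy)
    (fun _ hx _ hy => hg.add_deriv_mul_sub_le_of_deriv2_nonneg hU hsub (fun q hq => (hfg q hq).2.1)
      hx hy)
    hp hslope fun μ hμ x hx y hy =>
      mul_nonpos_of_nonneg_of_nonpos ((monovaryOn_id_iff.2 hmono).sub_mul_sub_nonneg hy hx)
        (sub_nonpos.2 (hord _ (hpK hμ)))

section WeightedWelfare

variable {I : Set ℝ} {D CS R : ℝ → ℝ} (α : ℝ)

theorem hasDerivAt_weightedWelfare (hI : IsOpen I) (hR : ContDiffOn ℝ 1 R I)
    (hCS : ∀ q ∈ I, HasDerivAt CS (-D q) q) {q : ℝ} (hq : q ∈ I) :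
    HasDerivAt (fun q => α * CS q + (1 - α) * R q) (α * -D q + (1 - α) * deriv R q) q :=
  ((hCS q hq).const_mul α).add <|
    ((hR.differentiableOn one_ne_zero).differentiableAt (hI.mem_nhds hq)).hasDerivAt.const_mul _

theorem contDiffOn_weightedWelfare (hI : IsOpen I) (hD : ContDiffOn ℝ 1 D I)
    (hR : ContDiffOn ℝ 2 R I) (hCS : ∀ q ∈ I, HasDerivAt CS (-D q) q) :
    ContDiffOn ℝ 2 (fun q => α * CS q + (1 - α) * R q) I :=
  contDiffOn_succ_of_hasDerivAt (n := 1) hI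
    (fun q hq => hasDerivAt_weightedWelfare α hI (hR.of_le (by norm_num)) hCS hq)
    ((contDiffOn_const.mul hD.neg).add
      (contDiffOn_const.mul (hR.deriv_of_isOpen hI (by norm_num))))

end WeightedWelfare

theorem stmt_5_general
    (I : Set ℝ) (DL DH RL RH : ℝ → ℝ) (pLs pHs : ℝ)
    (hIopen : IsOpen I) (hIconv : Convex ℝ I)
    (hRL : RL = fun q => q * DL q) (hRH : RH = fun q => q * DH q)
    (hDL : ContDiffOn ℝ 3 DL I) (hDH : ContDiffOn ℝ 3 DH I)
    (hDLpos : ∀ q ∈ I, 0 < DL q) (hDHpos : ∀ q ∈ I, 0 < DH q)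
    (hRL'' : ∀ q ∈ I, deriv (deriv RL) q < 0) (hRH'' : ∀ q ∈ I, deriv (deriv RH) q < 0)
    (hpLs : pLs ∈ I) (hpHs : pHs ∈ I) (hlt : pLs < pHs)
    (hRL' : deriv RL pLs = 0) (hRH' : deriv RH pHs = 0)
    (p : ℝ → ℝ)
    (hp : ∀ μ ∈ Set.Icc (0:ℝ) 1, p μ ∈ Set.Icc pLs pHs ∧
      (1 - μ) * deriv RL (p μ) + μ * deriv RH (p μ) = 0)
    (α : ℝ) (hα : α ∈ Set.Ioc (0:ℝ) 1)
    (CSL CSH VL VH : ℝ → ℝ)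
    (hCSL : ∀ q ∈ I, HasDerivAt CSL (-(DL q)) q)
    (hCSH : ∀ q ∈ I, HasDerivAt CSH (-(DH q)) q)
    (hVL : VL = fun q => α * CSL q + (1 - α) * RL q)
    (hVH : VH = fun q => α * CSH q + (1 - α) * RH q)
    (W : ℝ → ℝ)
    (hW : W = fun μ => (1 - μ) * VL (p μ) + μ * VH (p μ)) :
    (ConvexOn ℝ (Set.Icc (0:ℝ) 1) p →
      (∀ q ∈ Set.Ioo pLs pHs,
        deriv (deriv VL) q ≤ 0 ∧ deriv (deriv VH) q ≤ 0 ∧ deriv VH q ≤ deriv VL q) →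
      ConcaveOn ℝ (Set.Icc (0:ℝ) 1) W) ∧
    (ConcaveOn ℝ (Set.Icc (0:ℝ) 1) p →
      (∀ q ∈ Set.Ioo pLs pHs,
        0 ≤ deriv (deriv VL) q ∧ 0 ≤ deriv (deriv VH) q ∧ deriv VL q ≤ deriv VH q) →
      ConvexOn ℝ (Set.Icc (0:ℝ) 1) W) := by
  have hK : Icc pLs pHs ⊆ I := hIconv.ordConnected.out hpLs hpHs
  have hK' : Ioo pLs pHs ⊆ I := Ioo_subset_Icc_self.trans hK
  have hpK : MapsTo p (Icc 0 1) (Icc pLs pHs) := fun μ hμ => (hp μ hμ).1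
  have hRLC : ContDiffOn ℝ 2 RL I := hRL ▸ (contDiffOn_id.mul hDL).of_le (by norm_num)
  have hRHC : ContDiffOn ℝ 2 RH I := hRH ▸ (contDiffOn_id.mul hDH).of_le (by norm_num)
  have hVLC : ContDiffOn ℝ 2 VL I :=
    hVL ▸ contDiffOn_weightedWelfare α hIopen (hDL.of_le (by norm_num)) hRLC hCSL
  have hVHC : ContDiffOn ℝ 2 VH I :=
    hVH ▸ contDiffOn_weightedWelfare α hIopen (hDH.of_le (by norm_num)) hRHC hCSH
  have hmono : MonotoneOn p (Icc 0 1) :=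
    monotoneOn_of_mix_eq_zero hlt.le
      (hRLC.strictAntiOn_deriv_of_deriv2_neg hIopen hK fun q hq => hRL'' q (hK' hq))
      (hRHC.strictAntiOn_deriv_of_deriv2_neg hIopen hK fun q hq => hRH'' q (hK' hq))
      hRL' hRH' hp
  have hslope : ∀ μ ∈ Icc (0:ℝ) 1,
      (1 - μ) * deriv VL (p μ) + μ * deriv VH (p μ) ≤ 0 := by
    intro μ hμ
    obtain ⟨hpμ, hfoc⟩ := hp μ hμ
    have hq := hK hpμ
    rw [hVL, hVH,
      (hasDerivAt_weightedWelfare α hIopen (hRLC.of_le (by norm_num)) hCSL hq).deriv,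
      (hasDerivAt_weightedWelfare α hIopen (hRHC.of_le (by norm_num)) hCSH hq).deriv]
    have hD := mul_nonneg hα.1.le <| add_nonneg
      (mul_nonneg (sub_nonneg.2 hμ.2) (hDLpos _ hq).le) (mul_nonneg hμ.1 (hDHpos _ hq).le)
    linear_combination (1 - α) * hfoc + hD
  subst hW
  exact ⟨fun hpconv hV => concaveOn_mix_comp_of_deriv2_nonpos hIopen hVLC hVHC hlt hK hpK hpconv
      hmono hslope hV,
    fun hpconc hV => convexOn_mix_comp_of_deriv2_nonneg hIopen hVLC hVHC hlt hK hpK hpconc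
      hmono hslope hV⟩

/-- (Corollary 2: sufficient conditions for welfare-monotonicity.) In the
binary monopoly model with `D_L, D_H` three times continuously differentiable and fixed
`α ∈ (0,1]`: if the optimal-price function is convex on `[0,1]` and on `(p_L*, p_H*)` one has
`(V_L^α)'' ≤ 0`, `(V_H^α)'' ≤ 0` and `(V_H^α)' ≤ (V_L^α)'`, then `W^α` is concave on `[0,1]`;
symmetrically for the convex case. -/
theorem stmt_5
    (I : Set ℝ) (DL DH RL RH : ℝ → ℝ) (pLs pHs : ℝ)
    (hIopen : IsOpen I) (hIconv : Convex ℝ I) (hIpos : I ⊆ Set.Ioi (0:ℝ))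
    (hRL : RL = fun q => q * DL q) (hRH : RH = fun q => q * DH q)
    (hDL : ContDiffOn ℝ 3 DL I) (hDH : ContDiffOn ℝ 3 DH I)
    (hDLpos : ∀ q ∈ I, 0 < DL q) (hDHpos : ∀ q ∈ I, 0 < DH q)
    (hDL' : ∀ q ∈ I, deriv DL q < 0) (hDH' : ∀ q ∈ I, deriv DH q < 0)
    (hRL'' : ∀ q ∈ I, deriv (deriv RL) q < 0) (hRH'' : ∀ q ∈ I, deriv (deriv RH) q < 0)
    (hpLs : pLs ∈ I) (hpHs : pHs ∈ I) (hlt : pLs < pHs)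
    (hRL' : deriv RL pLs = 0) (hRH' : deriv RH pHs = 0)
    (p : ℝ → ℝ)
    (hp : ∀ μ ∈ Set.Icc (0:ℝ) 1, p μ ∈ Set.Icc pLs pHs ∧
      (1 - μ) * deriv RL (p μ) + μ * deriv RH (p μ) = 0)
    (α : ℝ) (hα : α ∈ Set.Ioc (0:ℝ) 1)
    (CSL CSH VL VH : ℝ → ℝ)
    (hCSL : ∀ q ∈ I, HasDerivAt CSL (-(DL q)) q)
    (hCSH : ∀ q ∈ I, HasDerivAt CSH (-(DH q)) q)
    (hVL : VL = fun q => α * CSL q + (1 - α) * RL q)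
    (hVH : VH = fun q => α * CSH q + (1 - α) * RH q)
    (W : ℝ → ℝ)
    (hW : W = fun μ => (1 - μ) * VL (p μ) + μ * VH (p μ)) :
    (ConvexOn ℝ (Set.Icc (0:ℝ) 1) p →
      (∀ q ∈ Set.Ioo pLs pHs,
        deriv (deriv VL) q ≤ 0 ∧ deriv (deriv VH) q ≤ 0 ∧ deriv VH q ≤ deriv VL q) →
      ConcaveOn ℝ (Set.Icc (0:ℝ) 1) W) ∧
    (ConcaveOn ℝ (Set.Icc (0:ℝ) 1) p →
      (∀ q ∈ Set.Ioo pLs pHs,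
        0 ≤ deriv (deriv VL) q ∧ 0 ≤ deriv (deriv VH) q ∧ deriv VL q ≤ deriv VH q) →
      ConvexOn ℝ (Set.Icc (0:ℝ) 1) W) :=
  stmt_5_general I DL DH RL RH pLs pHs hIopen hIconv hRL hRH hDL hDH hDLpos hDHpos hRL'' hRH'' hpLs
    hpHs hlt hRL' hRH' p hp α hα CSL CSH VL VH hCSL hCSH hVL hVH W hW
end

section
/- (Information monotonically good for all welfare weights.) In the binary monopoly model with D_L and D_H three times continuously differentiable, suppose that for every p ∈ (p_L*, p_H*): R_L'''(p) ≤ 0, R_H'''(p) ≤ 0, D_L(p) ≥ D_H(p), and R_H''(p) ≤ R_L''(p). Then for every α ∈ (0,1], the value function W^α is convex on [0,1]. -/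
/-!
The first-order condition makes the optimal price `p` the inverse of the belief map
`q ↦ -R_L' q / (R_H' q - R_L' q)`, which increases with derivative `N / g²`, where
`g = R_H' - R_L' > 0` and `N = R_L' R_H'' - R_H' R_L'' > 0`. By the envelope theorem
`W'(μ) = T (p μ)` with `T = α (CS_H - CS_L) + (1 - α) (R_H - R_L) - α M g / N` and
`M = R_H' D_L - R_L' D_H ≥ 0`; as `p` increases, it suffices that `T` is monotone in the price.
The first two terms increase because `D_L ≥ D_H` and `g ≥ 0`. The quotient `M g / N` decreases:
`g' = R_H'' - R_L'' ≤ 0`, `N' = R_L' R_H''' - R_H' R_L''' ≥ 0`, and `M' ≤ 0` because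
`q (R_H' D_L' - R_L' D_H') = -M` (from `R_i' = D_i + q D_i'`) while `R_H'' ≤ R_L'' < 0` and
`D_L ≥ D_H`.
-/

open Set

section DerivativeCriteria

variable {f f' : ℝ → ℝ} {a b : ℝ}

theorem monotoneOn_Icc_of_hasDerivAt (hf : ∀ x ∈ Icc a b, HasDerivAt f (f' x) x)
    (hf' : ∀ x ∈ Ioo a b, 0 ≤ f' x) : MonotoneOn f (Icc a b) :=
  monotoneOn_of_hasDerivWithinAt_nonneg (convex_Icc a b) (HasDerivAt.continuousOn hf)
    (fun x hx => (hf x (interior_subset hx)).hasDerivWithinAt) (by rwa [interior_Icc])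

theorem antitoneOn_Icc_of_hasDerivAt (hf : ∀ x ∈ Icc a b, HasDerivAt f (f' x) x)
    (hf' : ∀ x ∈ Ioo a b, f' x ≤ 0) : AntitoneOn f (Icc a b) :=
  antitoneOn_of_hasDerivWithinAt_nonpos (convex_Icc a b) (HasDerivAt.continuousOn hf)
    (fun x hx => (hf x (interior_subset hx)).hasDerivWithinAt) (by rwa [interior_Icc])

theorem strictMonoOn_Icc_of_hasDerivAt (hf : ∀ x ∈ Icc a b, HasDerivAt f (f' x) x)
    (hf' : ∀ x ∈ Ioo a b, 0 < f' x) : StrictMonoOn f (Icc a b) :=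
  strictMonoOn_of_hasDerivWithinAt_pos (convex_Icc a b) (HasDerivAt.continuousOn hf)
    (fun x hx => (hf x (interior_subset hx)).hasDerivWithinAt) (by rwa [interior_Icc])

theorem strictAntiOn_Icc_of_hasDerivAt (hf : ∀ x ∈ Icc a b, HasDerivAt f (f' x) x)
    (hf' : ∀ x ∈ Ioo a b, f' x < 0) : StrictAntiOn f (Icc a b) :=
  strictAntiOn_of_hasDerivWithinAt_neg (convex_Icc a b) (HasDerivAt.continuousOn hf)
    (fun x hx => (hf x (interior_subset hx)).hasDerivWithinAt) (by rwa [interior_Icc])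

theorem convexOn_Icc_of_hasDerivAt (hf : ContinuousOn f (Icc a b))
    (hf' : ∀ x ∈ Ioo a b, HasDerivAt f (f' x) x) (hmono : MonotoneOn f' (Ioo a b)) :
    ConvexOn ℝ (Icc a b) f := by
  refine MonotoneOn.convexOn_of_deriv (convex_Icc a b) hf ?_ ?_ <;> rw [interior_Icc]
  · exact fun x hx => (hf' x hx).differentiableAt.differentiableWithinAt
  · intro x hx y hy hxy
    rw [(hf' x hx).deriv, (hf' y hy).deriv]
    exact hmono hx hy hxy

end DerivativeCriteria

theorem ContDiffOn.hasDerivAt_of_isOpen {f : ℝ → ℝ} {s : Set ℝ} {n : WithTop ℕ∞} {x : ℝ}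
    (hf : ContDiffOn ℝ n f s) (hs : IsOpen s) (hn : n ≠ 0) (hx : x ∈ s) :
    HasDerivAt f (deriv f x) x :=
  ((hf.contDiffAt (hs.mem_nhds hx)).differentiableAt hn).hasDerivAt

theorem AntitoneOn.mul_div {s : Set ℝ} {f g h : ℝ → ℝ} (hf : AntitoneOn f s)
    (hg : AntitoneOn g s) (hh : MonotoneOn h s) (hf₀ : ∀ x ∈ s, 0 ≤ f x)
    (hg₀ : ∀ x ∈ s, 0 ≤ g x) (hh₀ : ∀ x ∈ s, 0 < h x) :
    AntitoneOn (fun x => f x * g x / h x) s :=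
  fun x hx y hy hxy => div_le_div₀ (mul_nonneg (hf₀ x hx) (hg₀ x hx))
    (mul_le_mul (hf hx hy hxy) (hg hx hy hxy) (hg₀ y hy) (hf₀ x hx)) (hh₀ x hx) (hh hx hy hxy)

theorem StrictMonoOn.continuousOn_Icc_of_image_eq {f : ℝ → ℝ} {a b : ℝ} (hab : a < b)
    (hf : StrictMonoOn f (Icc a b)) (himg : f '' Icc a b = Icc (f a) (f b)) :
    ContinuousOn f (Icc a b) := by
  have ha : a ∈ Icc a b := left_mem_Icc.2 hab.le
  have hb : b ∈ Icc a b := right_mem_Icc.2 hab.le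
  have hfab : f a < f b := hf ha hb hab
  intro x hx
  rcases hx.1.eq_or_lt with rfl | hax
  · refine (hf.continuousWithinAt_right_of_image_mem_nhdsWithin (Icc_mem_nhdsGE hab) ?_).mono
      Icc_subset_Ici_self
    exact himg ▸ Icc_mem_nhdsGE hfab
  rcases hx.2.eq_or_lt with rfl | hxb
  · refine (hf.continuousWithinAt_left_of_image_mem_nhdsWithin (Icc_mem_nhdsLE hax) ?_).mono
      Icc_subset_Iic_self
    exact himg ▸ Icc_mem_nhdsLE hfab
  refine (hf.continuousAt_of_image_mem_nhds (Icc_mem_nhds hax hxb) ?_).continuousWithinAt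
  exact himg ▸ Icc_mem_nhds (hf ha hx hax) (hf hx hb hxb)

section LeftInverse

variable {m p : ℝ → ℝ} {a b c d : ℝ}

theorem strictMonoOn_of_leftInvOn (hm : MonotoneOn m (Icc a b))
    (hmaps : MapsTo p (Icc c d) (Icc a b)) (hinv : LeftInvOn m p (Icc c d)) :
    StrictMonoOn p (Icc c d) := by
  intro y hy z hz hyz
  by_contra! h
  have := hm (hmaps hz) (hmaps hy) h
  rw [hinv hy, hinv hz] at this
  exact this.not_gt hyz

theorem continuousOn_of_leftInvOn (hab : a < b) (hm : StrictMonoOn m (Icc a b))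
    (hma : m a = c) (hmb : m b = d) (hmaps : MapsTo p (Icc c d) (Icc a b))
    (hinv : LeftInvOn m p (Icc c d)) : ContinuousOn p (Icc c d) := by
  have ha : a ∈ Icc a b := left_mem_Icc.2 hab.le
  have hb : b ∈ Icc a b := right_mem_Icc.2 hab.le
  have hcd : c < d := hma ▸ hmb ▸ hm ha hb hab
  have hm_maps : MapsTo m (Icc a b) (Icc c d) := fun x hx =>
    ⟨hma ▸ hm.monotoneOn ha hx hx.1, hmb ▸ hm.monotoneOn hx hb hx.2⟩
  have hpm : ∀ x ∈ Icc a b, p (m x) = x := fun x hx =>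
    hm.injOn (hmaps (hm_maps hx)) hx (hinv (hm_maps hx))
  have himg : p '' Icc c d = Icc a b :=
    (mapsTo_iff_image_subset.1 hmaps).antisymm fun x hx => ⟨m x, hm_maps hx, hpm x hx⟩
  refine (strictMonoOn_of_leftInvOn hm.monotoneOn hmaps hinv).continuousOn_Icc_of_image_eq hcd ?_
  rw [himg, ← hma, ← hmb, hpm a ha, hpm b hb]

end LeftInverse

section Price

variable {a b : ℝ} {u v u' v' p : ℝ → ℝ}

/-- The belief `μ` for which `x` solves the first-order condition `(1 - μ) u x + μ v x = 0`. -/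
noncomputable def belief (u v : ℝ → ℝ) (x : ℝ) : ℝ := -u x / (v x - u x)

theorem belief_eq_of_foc {x μ : ℝ} (hx : u x < v x) (h : (1 - μ) * u x + μ * v x = 0) :
    belief u v x = μ := by
  rw [belief, div_eq_iff (sub_pos.2 hx).ne']
  linear_combination -h

theorem hasDerivAt_belief {x u₀' v₀' : ℝ} (hu : HasDerivAt u u₀' x) (hv : HasDerivAt v v₀' x)
    (hx : u x < v x) :
    HasDerivAt (belief u v) ((u x * v₀' - v x * u₀') / (v x - u x) ^ 2) x := by
  refine (hu.neg.div (hv.sub hu) (sub_pos.2 hx).ne').congr_deriv ?_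
  simp only [Pi.neg_apply, Pi.sub_apply]
  ring

theorem wronskian_pos {u₀ v₀ u₀' v₀' : ℝ} (hu : u₀ ≤ 0) (hv : 0 ≤ v₀) (huv : u₀ < v₀)
    (hu' : u₀' < 0) (hv' : v₀' < 0) : 0 < u₀ * v₀' - v₀ * u₀' := by
  rcases hu.lt_or_eq with hu | rfl
  · nlinarith [mul_pos_of_neg_of_neg hu hv', mul_nonneg hv (neg_nonneg.2 hu'.le)]
  · nlinarith [mul_pos huv (neg_pos.2 hu')]

theorem marginal_signs (hab : a < b) (hu : ∀ x ∈ Icc a b, HasDerivAt u (u' x) x)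
    (hv : ∀ x ∈ Icc a b, HasDerivAt v (v' x) x) (hu' : ∀ x ∈ Icc a b, u' x < 0)
    (hv' : ∀ x ∈ Icc a b, v' x < 0) (hua : u a = 0) (hvb : v b = 0) :
    ∀ x ∈ Icc a b, u x ≤ 0 ∧ 0 ≤ v x ∧ u x < v x := by
  have hu_anti := strictAntiOn_Icc_of_hasDerivAt hu fun x hx => hu' x (Ioo_subset_Icc_self hx)
  have hv_anti := strictAntiOn_Icc_of_hasDerivAt hv fun x hx => hv' x (Ioo_subset_Icc_self hx)
  have ha : a ∈ Icc a b := left_mem_Icc.2 hab.le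
  have hb : b ∈ Icc a b := right_mem_Icc.2 hab.le
  intro x hx
  have hux : u x ≤ 0 := hua ▸ hu_anti.antitoneOn ha hx hx.1
  have hvx : 0 ≤ v x := hvb ▸ hv_anti.antitoneOn hx hb hx.2
  refine ⟨hux, hvx, ?_⟩
  rcases hx.1.eq_or_lt with rfl | hax
  · exact hua ▸ hvb ▸ hv_anti ha hb hab
  · exact (hua ▸ hu_anti ha hx hax).trans_le hvx

theorem strictMonoOn_belief (hu : ∀ x ∈ Icc a b, HasDerivAt u (u' x) x)
    (hv : ∀ x ∈ Icc a b, HasDerivAt v (v' x) x)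
    (hsign : ∀ x ∈ Icc a b, u x ≤ 0 ∧ 0 ≤ v x ∧ u x < v x)
    (hu' : ∀ x ∈ Icc a b, u' x < 0) (hv' : ∀ x ∈ Icc a b, v' x < 0) :
    StrictMonoOn (belief u v) (Icc a b) := by
  refine strictMonoOn_Icc_of_hasDerivAt
    (fun x hx => hasDerivAt_belief (hu x hx) (hv x hx) (hsign x hx).2.2) fun x hx => ?_
  have hx := Ioo_subset_Icc_self hx
  obtain ⟨hux, hvx, huv⟩ := hsign x hx
  exact div_pos (wronskian_pos hux hvx huv (hu' x hx) (hv' x hx)) (pow_pos (sub_pos.2 huv) 2)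

theorem price_of_foc (hab : a < b) (hu : ∀ x ∈ Icc a b, HasDerivAt u (u' x) x)
    (hv : ∀ x ∈ Icc a b, HasDerivAt v (v' x) x) (hu' : ∀ x ∈ Icc a b, u' x < 0) (hv' : ∀ x ∈ Icc a b, v' x < 0)
    (hua : u a = 0) (hvb : v b = 0)
    (hp : ∀ μ ∈ Icc (0 : ℝ) 1, p μ ∈ Icc a b ∧ (1 - μ) * u (p μ) + μ * v (p μ) = 0) :
    StrictMonoOn p (Icc 0 1) ∧ ContinuousOn p (Icc 0 1) ∧ ∀ μ ∈ Ioo (0 : ℝ) 1,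
      HasDerivAt p ((v (p μ) - u (p μ)) ^ 2 / (u (p μ) * v' (p μ) - v (p μ) * u' (p μ))) μ := by
  have hsign := marginal_signs hab hu hv hu' hv' hua hvb
  have hm := strictMonoOn_belief hu hv hsign hu' hv'
  have hmaps : MapsTo p (Icc 0 1) (Icc a b) := fun μ hμ => (hp μ hμ).1
  have hinv : LeftInvOn (belief u v) p (Icc 0 1) := fun μ hμ =>
    belief_eq_of_foc (hsign _ (hp μ hμ).1).2.2 (hp μ hμ).2
  have hma : belief u v a = 0 := by simp [belief, hua]
  have hmb : belief u v b = 1 := by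
    have hub : u b ≠ 0 := (hvb ▸ (hsign b (right_mem_Icc.2 hab.le)).2.2).ne
    rw [belief, hvb, zero_sub, neg_div_neg_eq, div_self hub]
  have hcont := continuousOn_of_leftInvOn hab hm hma hmb hmaps hinv
  refine ⟨strictMonoOn_of_leftInvOn hm.monotoneOn hmaps hinv, hcont, fun μ hμ => ?_⟩
  have hx := hmaps (Ioo_subset_Icc_self hμ)
  obtain ⟨hux, hvx, huv⟩ := hsign _ hx
  have hN := wronskian_pos hux hvx huv (hu' _ hx) (hv' _ hx)
  have h := (hasDerivAt_belief (hu _ hx) (hv _ hx) huv).of_local_left_inverse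
    (hcont.continuousAt (Icc_mem_nhds hμ.1 hμ.2)) (div_pos hN (pow_pos (sub_pos.2 huv) 2)).ne'
    (Filter.eventually_of_mem (Icc_mem_nhds hμ.1 hμ.2) hinv)
  rwa [inv_div] at h

end Price

section Slope

variable {a b : ℝ} {u v u' v' : ℝ → ℝ}

theorem monotoneOn_wronskian {u'' v'' : ℝ → ℝ}
    (hu : ∀ x ∈ Icc a b, HasDerivAt u (u' x) x) (hv : ∀ x ∈ Icc a b, HasDerivAt v (v' x) x)
    (hu' : ∀ x ∈ Icc a b, HasDerivAt u' (u'' x) x) (hv' : ∀ x ∈ Icc a b, HasDerivAt v' (v'' x) x)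
    (hsign : ∀ x ∈ Ioo a b, u x ≤ 0 ∧ 0 ≤ v x)
    (hu'' : ∀ x ∈ Ioo a b, u'' x ≤ 0) (hv'' : ∀ x ∈ Ioo a b, v'' x ≤ 0) :
    MonotoneOn (fun x => u x * v' x - v x * u' x) (Icc a b) := by
  refine monotoneOn_Icc_of_hasDerivAt
    (fun x hx => ((hu x hx).mul (hv' x hx)).sub ((hv x hx).mul (hu' x hx))) fun x hx => ?_
  obtain ⟨hux, hvx⟩ := hsign x hx
  nlinarith [mul_nonneg_of_nonpos_of_nonpos hux (hv'' x hx),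
    mul_nonpos_of_nonneg_of_nonpos hvx (hu'' x hx)]

theorem antitoneOn_demandCross {dL dH dL' dH' : ℝ → ℝ}
    (hu : ∀ x ∈ Icc a b, HasDerivAt u (u' x) x) (hv : ∀ x ∈ Icc a b, HasDerivAt v (v' x) x)
    (hdL : ∀ x ∈ Icc a b, HasDerivAt dL (dL' x) x) (hdH : ∀ x ∈ Icc a b, HasDerivAt dH (dH' x) x)
    (hu_eq : ∀ x ∈ Ioo a b, u x = dL x + x * dL' x)
    (hv_eq : ∀ x ∈ Ioo a b, v x = dH x + x * dH' x)
    (hpos : ∀ x ∈ Ioo a b, 0 < x) (hsign : ∀ x ∈ Ioo a b, u x ≤ 0 ∧ 0 ≤ v x)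
    (hdH₀ : ∀ x ∈ Ioo a b, 0 < dH x) (hu' : ∀ x ∈ Ioo a b, u' x ≤ 0)
    (hlevel : ∀ x ∈ Ioo a b, dH x ≤ dL x) (hcurv : ∀ x ∈ Ioo a b, v' x ≤ u' x) :
    AntitoneOn (fun x => v x * dL x - u x * dH x) (Icc a b) := by
  refine antitoneOn_Icc_of_hasDerivAt
    (fun x hx => ((hv x hx).mul (hdL x hx)).sub ((hu x hx).mul (hdH x hx))) fun x hx => ?_
  obtain ⟨hux, hvx⟩ := hsign x hx
  have hdL₀ : 0 ≤ dL x := (hdH₀ x hx).le.trans (hlevel x hx)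
  have hid : x * (v x * dL' x - u x * dH' x) = -(v x * dL x - u x * dH x) := by
    rw [hu_eq x hx, hv_eq x hx]
    ring
  have hM : 0 ≤ v x * dL x - u x * dH x := by
    nlinarith [mul_nonneg hvx hdL₀, mul_nonpos_of_nonpos_of_nonneg hux (hdH₀ x hx).le]
  have h₁ : v' x * dL x - u' x * dH x ≤ 0 := by
    nlinarith [mul_le_mul_of_nonneg_right (hcurv x hx) hdL₀,
      mul_le_mul_of_nonpos_left (hlevel x hx) (hu' x hx)]
  have h₂ : v x * dL' x - u x * dH' x ≤ 0 := by nlinarith [hpos x hx]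
  linarith

variable {α : ℝ} {CSL CSH RL RH DL DH : ℝ → ℝ}

/-- In the last term `M / g`, with `M = R_H' D_L - R_L' D_H` and `g = R_H' - R_L'`, is the
expected demand at the belief, and `g² / N` is the derivative of the optimal price. -/
noncomputable def welfareSlope (α : ℝ) (CSL CSH RL RH DL DH : ℝ → ℝ) (x : ℝ) : ℝ :=
  α * (CSH x - CSL x) + (1 - α) * (RH x - RL x) -
    α * ((deriv RH x * DL x - deriv RL x * DH x) * (deriv RH x - deriv RL x) /
      (deriv RL x * deriv (deriv RH) x - deriv RH x * deriv (deriv RL) x))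

theorem monotoneOn_welfareSlope (hα₀ : 0 ≤ α) (hα₁ : α ≤ 1)
    (hCSL : ∀ x ∈ Icc a b, HasDerivAt CSL (-DL x) x)
    (hCSH : ∀ x ∈ Icc a b, HasDerivAt CSH (-DH x) x)
    (hRL : ∀ x ∈ Icc a b, HasDerivAt RL (deriv RL x) x)
    (hRH : ∀ x ∈ Icc a b, HasDerivAt RH (deriv RH x) x)
    (hRL' : ∀ x ∈ Icc a b, HasDerivAt (deriv RL) (deriv (deriv RL) x) x)
    (hRH' : ∀ x ∈ Icc a b, HasDerivAt (deriv RH) (deriv (deriv RH) x) x)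
    (hRL'' : ∀ x ∈ Icc a b, HasDerivAt (deriv (deriv RL)) (deriv (deriv (deriv RL)) x) x)
    (hRH'' : ∀ x ∈ Icc a b, HasDerivAt (deriv (deriv RH)) (deriv (deriv (deriv RH)) x) x)
    (hDL : ∀ x ∈ Icc a b, HasDerivAt DL (deriv DL x) x)
    (hDH : ∀ x ∈ Icc a b, HasDerivAt DH (deriv DH x) x)
    (hRL_eq : ∀ x ∈ Icc a b, deriv RL x = DL x + x * deriv DL x)
    (hRH_eq : ∀ x ∈ Icc a b, deriv RH x = DH x + x * deriv DH x)
    (hpos : ∀ x ∈ Icc a b, 0 < x) (hDL₀ : ∀ x ∈ Icc a b, 0 < DL x)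
    (hDH₀ : ∀ x ∈ Icc a b, 0 < DH x)
    (hsign : ∀ x ∈ Icc a b, deriv RL x ≤ 0 ∧ 0 ≤ deriv RH x ∧ deriv RL x < deriv RH x)
    (hconcL : ∀ x ∈ Icc a b, deriv (deriv RL) x < 0)
    (hconcH : ∀ x ∈ Icc a b, deriv (deriv RH) x < 0)
    (hRL''' : ∀ x ∈ Ioo a b, deriv (deriv (deriv RL)) x ≤ 0)
    (hRH''' : ∀ x ∈ Ioo a b, deriv (deriv (deriv RH)) x ≤ 0)
    (hlevel : ∀ x ∈ Ioo a b, DH x ≤ DL x)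
    (hcurv : ∀ x ∈ Ioo a b, deriv (deriv RH) x ≤ deriv (deriv RL) x) :
    MonotoneOn (welfareSlope α CSL CSH RL RH DL DH) (Icc a b) := by
  have hIoo : Ioo a b ⊆ Icc a b := Ioo_subset_Icc_self
  have hsign' : ∀ x ∈ Ioo a b, deriv RL x ≤ 0 ∧ 0 ≤ deriv RH x := fun x hx =>
    ⟨(hsign x (hIoo hx)).1, (hsign x (hIoo hx)).2.1⟩
  have hCS : MonotoneOn (fun x => CSH x - CSL x) (Icc a b) :=
    monotoneOn_Icc_of_hasDerivAt (fun x hx => (hCSH x hx).sub (hCSL x hx))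
      fun x hx => by linarith [hlevel x hx]
  have hR : MonotoneOn (fun x => RH x - RL x) (Icc a b) :=
    monotoneOn_Icc_of_hasDerivAt (fun x hx => (hRH x hx).sub (hRL x hx))
      fun x hx => by linarith [(hsign x (hIoo hx)).2.2]
  have hM := antitoneOn_demandCross hRL' hRH' hDL hDH (fun x hx => hRL_eq x (hIoo hx))
    (fun x hx => hRH_eq x (hIoo hx)) (fun x hx => hpos x (hIoo hx)) hsign'
    (fun x hx => hDH₀ x (hIoo hx)) (fun x hx => (hconcL x (hIoo hx)).le) hlevel hcurv
  have hg : AntitoneOn (fun x => deriv RH x - deriv RL x) (Icc a b) :=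
    antitoneOn_Icc_of_hasDerivAt (fun x hx => (hRH' x hx).sub (hRL' x hx))
      fun x hx => by linarith [hcurv x hx]
  have hQ := hM.mul_div hg (monotoneOn_wronskian hRL' hRH' hRL'' hRH'' hsign' hRL''' hRH''')
    (fun x hx => by nlinarith [hsign x hx, hDL₀ x hx, hDH₀ x hx])
    (fun x hx => by linarith [(hsign x hx).2.2])
    fun x hx => wronskian_pos (hsign x hx).1 (hsign x hx).2.1 (hsign x hx).2.2 (hconcL x hx)
      (hconcH x hx)
  intro x hx y hy hxy
  simp only [welfareSlope]
  linarith [mul_le_mul_of_nonneg_left (hCS hx hy hxy) hα₀,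
    mul_le_mul_of_nonneg_left (hR hx hy hxy) (sub_nonneg.2 hα₁),
    mul_le_mul_of_nonneg_left (hQ hx hy hxy) hα₀]

end Slope

section Envelope

variable {α : ℝ} {CSL CSH RL RH DL DH p : ℝ → ℝ}

theorem hasDerivAt_mix_comp {VL VH : ℝ → ℝ} {VL' VH' p' μ : ℝ} (hVL : HasDerivAt VL VL' (p μ))
    (hVH : HasDerivAt VH VH' (p μ)) (hp : HasDerivAt p p' μ) :
    HasDerivAt (fun μ => (1 - μ) * VL (p μ) + μ * VH (p μ))
      (VH (p μ) - VL (p μ) + ((1 - μ) * VL' + μ * VH') * p') μ := by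
  refine ((((hasDerivAt_id μ).const_sub 1).mul (hVL.comp μ hp)).add
    ((hasDerivAt_id μ).mul (hVH.comp μ hp))).congr_deriv ?_
  simp only [Function.comp_apply, id_eq]
  ring

theorem hasDerivAt_valueFunction {μ : ℝ}
    (hp : HasDerivAt p ((deriv RH (p μ) - deriv RL (p μ)) ^ 2 / (deriv RL (p μ) *
      deriv (deriv RH) (p μ) - deriv RH (p μ) * deriv (deriv RL) (p μ))) μ)
    (hfoc : (1 - μ) * deriv RL (p μ) + μ * deriv RH (p μ) = 0)
    (hCSL : HasDerivAt CSL (-DL (p μ)) (p μ)) (hCSH : HasDerivAt CSH (-DH (p μ)) (p μ))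
    (hRL : HasDerivAt RL (deriv RL (p μ)) (p μ)) (hRH : HasDerivAt RH (deriv RH (p μ)) (p μ)) :
    HasDerivAt (fun μ => (1 - μ) * (α * CSL (p μ) + (1 - α) * RL (p μ)) +
      μ * (α * CSH (p μ) + (1 - α) * RH (p μ))) (welfareSlope α CSL CSH RL RH DL DH (p μ)) μ := by
  refine (hasDerivAt_mix_comp ((hCSL.const_mul α).add (hRL.const_mul (1 - α)))
    ((hCSH.const_mul α).add (hRH.const_mul (1 - α))) hp).congr_deriv ?_
  set g := deriv RH (p μ) - deriv RL (p μ)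
  set N := deriv RL (p μ) * deriv (deriv RH) (p μ) - deriv RH (p μ) * deriv (deriv RL) (p μ)
  simp only [welfareSlope, Pi.add_apply]
  linear_combination ((1 - α) * g ^ 2 / N - α * g * (DH (p μ) - DL (p μ)) / N) * hfoc

theorem continuousOn_valueFunction {s t : Set ℝ} (hCSL : ContinuousOn CSL t)
    (hCSH : ContinuousOn CSH t) (hRL : ContinuousOn RL t) (hRH : ContinuousOn RH t)
    (hp : ContinuousOn p s) (hmaps : MapsTo p s t) :
    ContinuousOn (fun μ => (1 - μ) * (α * CSL (p μ) + (1 - α) * RL (p μ)) +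
      μ * (α * CSH (p μ) + (1 - α) * RH (p μ))) s := by
  fun_prop (disch := exact hmaps)

end Envelope

theorem revenue_hasDerivAt {I : Set ℝ} {D R : ℝ → ℝ} {x : ℝ} (hI : IsOpen I)
    (hD : ContDiffOn ℝ 3 D I) (hR : R = fun q => q * D q) (hx : x ∈ I) :
    HasDerivAt D (deriv D x) x ∧ HasDerivAt R (deriv R x) x ∧
      HasDerivAt (deriv R) (deriv (deriv R) x) x ∧
      HasDerivAt (deriv (deriv R)) (deriv (deriv (deriv R)) x) x ∧
      deriv R x = D x + x * deriv D x := by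
  have hR3 : ContDiffOn ℝ 3 R I := hR ▸ contDiffOn_id.mul hD
  have hR2 : ContDiffOn ℝ 2 (deriv R) I := hR3.deriv_of_isOpen hI (by norm_num)
  have hD' := hD.hasDerivAt_of_isOpen hI (by norm_num) hx
  refine ⟨hD', hR3.hasDerivAt_of_isOpen hI (by norm_num) hx,
    hR2.hasDerivAt_of_isOpen hI (by norm_num) hx,
    (hR2.deriv_of_isOpen hI (m := 1) (by norm_num)).hasDerivAt_of_isOpen hI (by norm_num) hx, ?_⟩
  subst hR
  exact ((hasDerivAt_id x).mul hD').deriv.trans (by simp)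

theorem stmt_6_general
    (I : Set ℝ) (DL DH RL RH : ℝ → ℝ) (pLs pHs : ℝ)
    (hIopen : IsOpen I) (hIconv : Convex ℝ I) (hIpos : I ⊆ Set.Ioi (0:ℝ))
    (hRL : RL = fun q => q * DL q) (hRH : RH = fun q => q * DH q)
    (hDL : ContDiffOn ℝ 3 DL I) (hDH : ContDiffOn ℝ 3 DH I)
    (hDLpos : ∀ q ∈ I, 0 < DL q) (hDHpos : ∀ q ∈ I, 0 < DH q)
    (hRL'' : ∀ q ∈ I, deriv (deriv RL) q < 0) (hRH'' : ∀ q ∈ I, deriv (deriv RH) q < 0)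
    (hpLs : pLs ∈ I) (hpHs : pHs ∈ I) (hlt : pLs < pHs)
    (hRL' : deriv RL pLs = 0) (hRH' : deriv RH pHs = 0)
    (p : ℝ → ℝ)
    (hp : ∀ μ ∈ Set.Icc (0:ℝ) 1, p μ ∈ Set.Icc pLs pHs ∧
      (1 - μ) * deriv RL (p μ) + μ * deriv RH (p μ) = 0)
    (CSL CSH : ℝ → ℝ)
    (hCSL : ∀ q ∈ I, HasDerivAt CSL (-(DL q)) q)
    (hCSH : ∀ q ∈ I, HasDerivAt CSH (-(DH q)) q)
    (W : ℝ → ℝ → ℝ)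
    (hW : ∀ α : ℝ, W α = fun μ =>
      (1 - μ) * (α * CSL (p μ) + (1 - α) * RL (p μ)) +
        μ * (α * CSH (p μ) + (1 - α) * RH (p μ)))
    (hRL''' : ∀ q ∈ Set.Ioo pLs pHs, deriv (deriv (deriv RL)) q ≤ 0)
    (hRH''' : ∀ q ∈ Set.Ioo pLs pHs, deriv (deriv (deriv RH)) q ≤ 0)
    (hlevel : ∀ q ∈ Set.Ioo pLs pHs, DH q ≤ DL q)
    (hcurv : ∀ q ∈ Set.Ioo pLs pHs, deriv (deriv RH) q ≤ deriv (deriv RL) q) :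
    ∀ α ∈ Set.Ioc (0:ℝ) 1, ConvexOn ℝ (Set.Icc (0:ℝ) 1) (W α) := by
  intro α ⟨hα₀, hα₁⟩
  have hs : Icc pLs pHs ⊆ I := hIconv.ordConnected.out hpLs hpHs
  choose dDL dRL d1RL d2RL hRL_eq using fun x (hx : x ∈ Icc pLs pHs) =>
    revenue_hasDerivAt hIopen hDL hRL (hs hx)
  choose dDH dRH d1RH d2RH hRH_eq using fun x (hx : x ∈ Icc pLs pHs) =>
    revenue_hasDerivAt hIopen hDH hRH (hs hx)
  have hCSL' : ∀ x ∈ Icc pLs pHs, HasDerivAt CSL (-DL x) x := fun x hx => hCSL x (hs hx)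
  have hCSH' : ∀ x ∈ Icc pLs pHs, HasDerivAt CSH (-DH x) x := fun x hx => hCSH x (hs hx)
  have hconcL : ∀ x ∈ Icc pLs pHs, deriv (deriv RL) x < 0 := fun x hx => hRL'' x (hs hx)
  have hconcH : ∀ x ∈ Icc pLs pHs, deriv (deriv RH) x < 0 := fun x hx => hRH'' x (hs hx)
  have hsign := marginal_signs hlt d1RL d1RH hconcL hconcH hRL' hRH'
  obtain ⟨hpmono, hpcont, hpderiv⟩ := price_of_foc hlt d1RL d1RH hconcL hconcH hRL' hRH' hp
  have hmaps : MapsTo p (Icc 0 1) (Icc pLs pHs) := fun μ hμ => (hp μ hμ).1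
  have hT := monotoneOn_welfareSlope hα₀.le hα₁ hCSL' hCSH' dRL dRH d1RL d1RH d2RL d2RH dDL dDH
    hRL_eq hRH_eq (fun x hx => hIpos (hs hx)) (fun x hx => hDLpos x (hs hx))
    (fun x hx => hDHpos x (hs hx)) hsign hconcL hconcH hRL''' hRH''' hlevel hcurv
  rw [hW]
  refine convexOn_Icc_of_hasDerivAt (continuousOn_valueFunction (HasDerivAt.continuousOn hCSL')
      (HasDerivAt.continuousOn hCSH') (HasDerivAt.continuousOn dRL) (HasDerivAt.continuousOn dRH)
      hpcont hmaps) (fun μ hμ => ?_) ((hT.comp hpmono.monotoneOn hmaps).mono Ioo_subset_Icc_self)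
  have hx := hmaps (Ioo_subset_Icc_self hμ)
  exact hasDerivAt_valueFunction (hpderiv μ hμ) (hp μ (Ioo_subset_Icc_self hμ)).2
    (hCSL' _ hx) (hCSH' _ hx) (dRL _ hx) (dRH _ hx)

/-- (Information monotonically good for all welfare weights.) In the binary
monopoly model with `D_L, D_H` three times continuously differentiable, if on `(p_L*, p_H*)`
the marginal revenue curves are concave (`R_i''' ≤ 0`), the more elastic demand has a higher
level (`D_L ≥ D_H`) and a less concave revenue curve (`R_H'' ≤ R_L''`), then for every
`α ∈ (0,1]` the value function `W^α` is convex on `[0,1]`. -/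
theorem stmt_6
    (I : Set ℝ) (DL DH RL RH : ℝ → ℝ) (pLs pHs : ℝ)
    (hIopen : IsOpen I) (hIconv : Convex ℝ I) (hIpos : I ⊆ Set.Ioi (0:ℝ))
    (hRL : RL = fun q => q * DL q) (hRH : RH = fun q => q * DH q)
    (hDL : ContDiffOn ℝ 3 DL I) (hDH : ContDiffOn ℝ 3 DH I)
    (hDLpos : ∀ q ∈ I, 0 < DL q) (hDHpos : ∀ q ∈ I, 0 < DH q)
    (hDL' : ∀ q ∈ I, deriv DL q < 0) (hDH' : ∀ q ∈ I, deriv DH q < 0)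
    (hRL'' : ∀ q ∈ I, deriv (deriv RL) q < 0) (hRH'' : ∀ q ∈ I, deriv (deriv RH) q < 0)
    (hpLs : pLs ∈ I) (hpHs : pHs ∈ I) (hlt : pLs < pHs)
    (hRL' : deriv RL pLs = 0) (hRH' : deriv RH pHs = 0)
    (p : ℝ → ℝ)
    (hp : ∀ μ ∈ Set.Icc (0:ℝ) 1, p μ ∈ Set.Icc pLs pHs ∧
      (1 - μ) * deriv RL (p μ) + μ * deriv RH (p μ) = 0)
    (CSL CSH : ℝ → ℝ)
    (hCSL : ∀ q ∈ I, HasDerivAt CSL (-(DL q)) q)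
    (hCSH : ∀ q ∈ I, HasDerivAt CSH (-(DH q)) q)
    (W : ℝ → ℝ → ℝ)
    (hW : ∀ α : ℝ, W α = fun μ =>
      (1 - μ) * (α * CSL (p μ) + (1 - α) * RL (p μ)) +
        μ * (α * CSH (p μ) + (1 - α) * RH (p μ)))
    (hRL''' : ∀ q ∈ Set.Ioo pLs pHs, deriv (deriv (deriv RL)) q ≤ 0)
    (hRH''' : ∀ q ∈ Set.Ioo pLs pHs, deriv (deriv (deriv RH)) q ≤ 0)
    (hlevel : ∀ q ∈ Set.Ioo pLs pHs, DH q ≤ DL q)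
    (hcurv : ∀ q ∈ Set.Ioo pLs pHs, deriv (deriv RH) q ≤ deriv (deriv RL) q) :
    ∀ α ∈ Set.Ioc (0:ℝ) 1, ConvexOn ℝ (Set.Icc (0:ℝ) 1) (W α) :=
  stmt_6_general I DL DH RL RH pLs pHs hIopen hIconv hIpos hRL hRH hDL hDH hDLpos hDHpos hRL'' hRH''
    hpLs hpHs hlt hRL' hRH' p hp CSL CSH hCSL hCSH W hW hRL''' hRH''' hlevel hcurv
end

section
/- (Curvature of the optimal-price function.) In the binary monopoly model with D_L and D_H three times continuously differentiable: if R_L'''(p) ≥ 0, R_H'''(p) ≥ 0 and R_H''(p) ≥ R_L''(p) for all p ∈ (p_L*, p_H*), then p''(μ) ≥ 0 for all μ ∈ (0,1) (the optimal-price function is convex on [0,1]); if instead R_L'''(p) ≤ 0, R_H'''(p) ≤ 0 and R_H''(p) ≤ R_L''(p) for all p ∈ (p_L*, p_H*), then p''(μ) ≤ 0 for all μ ∈ (0,1) (the optimal-price function is concave on [0,1]). -/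
/-!
The optimal price `p` is the inverse of the belief map `m q = R_L' q / (R_L' q - R_H' q)`, which is
increasing on `[p_L*, p_H*]` because `R_L' ≤ 0 ≤ R_H'` there and both are decreasing. Hence
`p'' = -m''(p) / m'(p) ^ 3` with `m' > 0`, and `p''` has the sign of
`(R_L' R_H''' - R_L''' R_H') (R_L' - R_H') - 2 (R_L' R_H'' - R_L'' R_H') (R_L'' - R_H'')`,
both of whose terms have the required sign under either set of hypotheses.
-/

open Set Filter Topology

theorem MonotoneOn.continuousOn_of_surjOn {α β : Type*} [LinearOrder α] [TopologicalSpace α]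
    [OrderTopology α] [LinearOrder β] [TopologicalSpace β] [OrderTopology β] [DenselyOrdered β]
    {f : α → β} {s : Set α} {t : Set β} [s.OrdConnected] [t.OrdConnected]
    (hf : MonotoneOn f s) (hmaps : MapsTo f s t) (hsurj : SurjOn f s t) : ContinuousOn f s := by
  rw [continuousOn_iff_continuous_domRestrict]
  have hmono : Monotone (hmaps.restrict f s t) := fun x y hxy => hf x.2 y.2 hxy
  exact continuous_subtype_val.comp
    (hmono.continuous_of_surjective (hmaps.restrict_surjective_iff.2 hsurj))

theorem hasDerivAt_of_leftInvOn {m m' p : ℝ → ℝ} {U : Set ℝ} (hU : IsOpen U)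
    (hp : ∀ x ∈ U, ContinuousAt p x) (hmp : ∀ x ∈ U, m (p x) = x)
    (hm : ∀ x ∈ U, HasDerivAt m (m' (p x)) (p x)) (hm'0 : ∀ x ∈ U, m' (p x) ≠ 0)
    {x : ℝ} (hx : x ∈ U) : HasDerivAt p (m' (p x))⁻¹ x :=
  (hm x hx).of_local_left_inverse (hp x hx) (hm'0 x hx)
    (eventually_of_mem (hU.mem_nhds hx) hmp)

theorem hasDerivAt_deriv_of_leftInvOn {m m' m'' p : ℝ → ℝ} {U : Set ℝ} (hU : IsOpen U)
    (hp : ∀ x ∈ U, ContinuousAt p x) (hmp : ∀ x ∈ U, m (p x) = x)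
    (hm : ∀ x ∈ U, HasDerivAt m (m' (p x)) (p x))
    (hm' : ∀ x ∈ U, HasDerivAt m' (m'' (p x)) (p x))
    (hm'0 : ∀ x ∈ U, m' (p x) ≠ 0) {x : ℝ} (hx : x ∈ U) :
    HasDerivAt (deriv p) (-m'' (p x) / m' (p x) ^ 3) x := by
  have hev : deriv p =ᶠ[𝓝 x] fun y => (m' (p y))⁻¹ := eventually_of_mem (hU.mem_nhds hx)
    fun y hy => (hasDerivAt_of_leftInvOn hU hp hmp hm hm'0 hy).deriv
  have hcomp := (hm' x hx).comp x (hasDerivAt_of_leftInvOn hU hp hmp hm hm'0 hx)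
  refine ((hcomp.inv (hm'0 x hx)).congr_of_eventuallyEq hev).congr_deriv ?_
  have := hm'0 x hx
  simp only [Function.comp_apply]
  field_simp

theorem strictAntiOn_Icc_of_deriv_neg {f : ℝ → ℝ} {a b : ℝ}
    (hf : ∀ q ∈ Icc a b, DifferentiableAt ℝ f q) (hf' : ∀ q ∈ Icc a b, deriv f q < 0) :
    StrictAntiOn f (Icc a b) :=
  strictAntiOn_of_deriv_neg (convex_Icc a b)
    (fun q hq => (hf q hq).continuousAt.continuousWithinAt)
    (fun q hq => hf' q (interior_subset hq))

theorem ContDiffOn.differentiableOn_deriv_deriv {f : ℝ → ℝ} {s : Set ℝ} (hs : IsOpen s)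
    (hf : ContDiffOn ℝ 3 f s) :
    DifferentiableOn ℝ (deriv f) s ∧ DifferentiableOn ℝ (deriv (deriv f)) s := by
  have hf' : ContDiffOn ℝ 2 (deriv f) s := hf.deriv_of_isOpen hs (by norm_num)
  exact ⟨hf'.differentiableOn (by norm_num),
    (hf'.deriv_of_isOpen hs (by norm_num) : ContDiffOn ℝ 1 _ s).differentiableOn one_ne_zero⟩

noncomputable def beliefOfPrice (g h : ℝ → ℝ) (q : ℝ) : ℝ := g q / (g q - h q)

noncomputable def beliefOfPriceDeriv (g h : ℝ → ℝ) (q : ℝ) : ℝ :=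
  (g q * deriv h q - deriv g q * h q) / (g q - h q) ^ 2

noncomputable def beliefOfPriceDeriv2 (g h : ℝ → ℝ) (q : ℝ) : ℝ :=
  ((g q * deriv (deriv h) q - deriv (deriv g) q * h q) * (g q - h q) -
      2 * (g q * deriv h q - deriv g q * h q) * (deriv g q - deriv h q)) / (g q - h q) ^ 3

section Derivatives

variable {g h : ℝ → ℝ} {q : ℝ}

theorem beliefOfPrice_eq_iff {μ : ℝ} (hgh : g q ≠ h q) :
    beliefOfPrice g h q = μ ↔ (1 - μ) * g q + μ * h q = 0 := by
  rw [beliefOfPrice, div_eq_iff (sub_ne_zero.2 hgh)]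
  constructor <;> intro h <;> linarith

theorem hasDerivAt_beliefOfPrice (hg : DifferentiableAt ℝ g q) (hh : DifferentiableAt ℝ h q)
    (hgh : g q ≠ h q) : HasDerivAt (beliefOfPrice g h) (beliefOfPriceDeriv g h q) q := by
  refine (hg.hasDerivAt.div (hg.hasDerivAt.sub hh.hasDerivAt) (sub_ne_zero.2 hgh)).congr_deriv ?_
  simp only [beliefOfPriceDeriv, Pi.sub_apply]
  field_simp
  ring

theorem hasDerivAt_beliefOfPriceDeriv (hg : DifferentiableAt ℝ g q)
    (hh : DifferentiableAt ℝ h q) (hg' : DifferentiableAt ℝ (deriv g) q)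
    (hh' : DifferentiableAt ℝ (deriv h) q) (hgh : g q ≠ h q) :
    HasDerivAt (beliefOfPriceDeriv g h) (beliefOfPriceDeriv2 g h q) q := by
  have hnum := (hg.hasDerivAt.mul hh'.hasDerivAt).sub (hg'.hasDerivAt.mul hh.hasDerivAt)
  have hden := (hg.hasDerivAt.sub hh.hasDerivAt).pow 2
  have hne : g q - h q ≠ 0 := sub_ne_zero.2 hgh
  refine (hnum.div hden (pow_ne_zero 2 hne)).congr_deriv ?_
  simp only [beliefOfPriceDeriv2, Pi.sub_apply, Pi.mul_apply, Pi.pow_apply]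
  field_simp
  ring

end Derivatives

theorem beliefOfPriceDeriv2_nonpos {g h : ℝ → ℝ} {q : ℝ} (hg : g q ≤ 0) (hh : 0 ≤ h q)
    (hgh : g q < h q) (hslope : 0 ≤ g q * deriv h q - deriv g q * h q)
    (hg'' : 0 ≤ deriv (deriv g) q) (hh'' : 0 ≤ deriv (deriv h) q)
    (hg'h' : deriv g q ≤ deriv h q) : beliefOfPriceDeriv2 g h q ≤ 0 := by
  have hcross : g q * deriv (deriv h) q - deriv (deriv g) q * h q ≤ 0 := by
    nlinarith [mul_nonpos_of_nonpos_of_nonneg hg hh'', mul_nonneg hg'' hh]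
  refine div_nonpos_of_nonneg_of_nonpos ?_ (Odd.pow_neg (by decide) (sub_neg.2 hgh)).le
  nlinarith [mul_nonneg_of_nonpos_of_nonpos hcross (sub_neg.2 hgh).le,
    mul_nonpos_of_nonneg_of_nonpos hslope (sub_nonpos.2 hg'h')]

theorem beliefOfPriceDeriv2_nonneg {g h : ℝ → ℝ} {q : ℝ} (hg : g q ≤ 0) (hh : 0 ≤ h q)
    (hgh : g q < h q) (hslope : 0 ≤ g q * deriv h q - deriv g q * h q)
    (hg'' : deriv (deriv g) q ≤ 0) (hh'' : deriv (deriv h) q ≤ 0)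
    (hh'g' : deriv h q ≤ deriv g q) : 0 ≤ beliefOfPriceDeriv2 g h q := by
  have hcross : 0 ≤ g q * deriv (deriv h) q - deriv (deriv g) q * h q := by
    nlinarith [mul_nonneg_of_nonpos_of_nonpos hg hh'', mul_nonpos_of_nonpos_of_nonneg hg'' hh]
  refine div_nonneg_of_nonpos ?_ (Odd.pow_neg (by decide) (sub_neg.2 hgh)).le
  nlinarith [mul_nonpos_of_nonneg_of_nonpos hcross (sub_neg.2 hgh).le,
    mul_nonneg hslope (sub_nonneg.2 hh'g')]

/-- `g`, `h` play the roles of `R_L'`, `R_H'`, and `a`, `b` those of `p_L*`, `p_H*`. -/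
structure IsMarginalRevenuePair (g h : ℝ → ℝ) (a b : ℝ) : Prop where
  lt : a < b
  differentiableAt_g : ∀ q ∈ Icc a b, DifferentiableAt ℝ g q
  differentiableAt_h : ∀ q ∈ Icc a b, DifferentiableAt ℝ h q
  deriv_g_neg : ∀ q ∈ Icc a b, deriv g q < 0
  deriv_h_neg : ∀ q ∈ Icc a b, deriv h q < 0
  g_left : g a = 0
  h_right : h b = 0

def IsOptimalPrice (g h : ℝ → ℝ) (a b : ℝ) (p : ℝ → ℝ) : Prop :=
  ∀ μ ∈ Icc (0 : ℝ) 1, p μ ∈ Icc a b ∧ (1 - μ) * g (p μ) + μ * h (p μ) = 0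

namespace IsMarginalRevenuePair

variable {g h p : ℝ → ℝ} {a b q μ : ℝ}

theorem g_nonpos (H : IsMarginalRevenuePair g h a b) (hq : q ∈ Icc a b) : g q ≤ 0 :=
  H.g_left ▸ (strictAntiOn_Icc_of_deriv_neg H.differentiableAt_g H.deriv_g_neg).antitoneOn
    ⟨le_rfl, H.lt.le⟩ hq hq.1

theorem h_nonneg (H : IsMarginalRevenuePair g h a b) (hq : q ∈ Icc a b) : 0 ≤ h q :=
  H.h_right ▸ (strictAntiOn_Icc_of_deriv_neg H.differentiableAt_h H.deriv_h_neg).antitoneOn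
    hq ⟨H.lt.le, le_rfl⟩ hq.2

theorem g_lt_h (H : IsMarginalRevenuePair g h a b) (hq : q ∈ Icc a b) : g q < h q := by
  rcases hq.1.eq_or_lt with rfl | haq
  · exact H.g_left ▸ H.h_right ▸
      strictAntiOn_Icc_of_deriv_neg H.differentiableAt_h H.deriv_h_neg hq ⟨H.lt.le, le_rfl⟩ H.lt
  · exact (H.g_left ▸ strictAntiOn_Icc_of_deriv_neg H.differentiableAt_g H.deriv_g_neg
      ⟨le_rfl, H.lt.le⟩ hq haq).trans_le (H.h_nonneg hq)

theorem slope_pos (H : IsMarginalRevenuePair g h a b) (hq : q ∈ Icc a b) :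
    0 < g q * deriv h q - deriv g q * h q := by
  have hg := H.g_nonpos hq
  have hh := H.h_nonneg hq
  have hgh := H.g_lt_h hq
  have hg' := H.deriv_g_neg q hq
  have hh' := H.deriv_h_neg q hq
  rcases hg.eq_or_lt with hg0 | hg0
  · rw [hg0] at hgh ⊢
    nlinarith
  · nlinarith [mul_nonneg (neg_nonneg.2 hg'.le) hh]

theorem beliefOfPriceDeriv_pos (H : IsMarginalRevenuePair g h a b) (hq : q ∈ Icc a b) :
    0 < beliefOfPriceDeriv g h q :=
  div_pos (H.slope_pos hq) (sq_pos_of_neg (sub_neg.2 (H.g_lt_h hq)))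

theorem hasDerivAt_beliefOfPrice (H : IsMarginalRevenuePair g h a b) (hq : q ∈ Icc a b) :
    HasDerivAt (beliefOfPrice g h) (beliefOfPriceDeriv g h q) q :=
  _root_.hasDerivAt_beliefOfPrice (H.differentiableAt_g q hq) (H.differentiableAt_h q hq)
    (H.g_lt_h hq).ne

theorem strictMonoOn_beliefOfPrice (H : IsMarginalRevenuePair g h a b) :
    StrictMonoOn (beliefOfPrice g h) (Icc a b) :=
  strictMonoOn_of_deriv_pos (convex_Icc a b)
    (fun q hq => (H.hasDerivAt_beliefOfPrice hq).continuousAt.continuousWithinAt)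
    fun q hq => by
      rw [(H.hasDerivAt_beliefOfPrice (interior_subset hq)).deriv]
      exact H.beliefOfPriceDeriv_pos (interior_subset hq)

theorem beliefOfPrice_left (H : IsMarginalRevenuePair g h a b) : beliefOfPrice g h a = 0 := by
  simp [beliefOfPrice, H.g_left]

theorem beliefOfPrice_right (H : IsMarginalRevenuePair g h a b) : beliefOfPrice g h b = 1 := by
  have hgb : g b ≠ 0 := (H.h_right ▸ H.g_lt_h ⟨H.lt.le, le_rfl⟩).ne
  simp [beliefOfPrice, H.h_right, hgb]

theorem mapsTo_beliefOfPrice (H : IsMarginalRevenuePair g h a b) :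
    MapsTo (beliefOfPrice g h) (Icc a b) (Icc 0 1) := fun q hq => by
  rw [← H.beliefOfPrice_left, ← H.beliefOfPrice_right]
  exact H.strictMonoOn_beliefOfPrice.monotoneOn.mapsTo_Icc hq

theorem beliefOfPrice_optimalPrice (H : IsMarginalRevenuePair g h a b)
    (hp : IsOptimalPrice g h a b p) (hμ : μ ∈ Icc 0 1) : beliefOfPrice g h (p μ) = μ :=
  (beliefOfPrice_eq_iff (H.g_lt_h (hp μ hμ).1).ne).2 (hp μ hμ).2

theorem optimalPrice_beliefOfPrice (H : IsMarginalRevenuePair g h a b)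
    (hp : IsOptimalPrice g h a b p) (hq : q ∈ Icc a b) : p (beliefOfPrice g h q) = q :=
  H.strictMonoOn_beliefOfPrice.injOn (hp _ (H.mapsTo_beliefOfPrice hq)).1 hq
    (H.beliefOfPrice_optimalPrice hp (H.mapsTo_beliefOfPrice hq))

theorem strictMonoOn_optimalPrice (H : IsMarginalRevenuePair g h a b)
    (hp : IsOptimalPrice g h a b p) : StrictMonoOn p (Icc 0 1) := fun μ hμ ν hν hμν => by
  rw [← H.strictMonoOn_beliefOfPrice.lt_iff_lt (hp μ hμ).1 (hp ν hν).1,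
    H.beliefOfPrice_optimalPrice hp hμ, H.beliefOfPrice_optimalPrice hp hν]
  exact hμν

theorem continuousOn_optimalPrice (H : IsMarginalRevenuePair g h a b)
    (hp : IsOptimalPrice g h a b p) : ContinuousOn p (Icc 0 1) :=
  (H.strictMonoOn_optimalPrice hp).monotoneOn.continuousOn_of_surjOn (fun μ hμ => (hp μ hμ).1)
    fun _ hq => ⟨_, H.mapsTo_beliefOfPrice hq, H.optimalPrice_beliefOfPrice hp hq⟩

theorem optimalPrice_mem_Ioo (H : IsMarginalRevenuePair g h a b)
    (hp : IsOptimalPrice g h a b p) (hμ : μ ∈ Ioo 0 1) : p μ ∈ Ioo a b := by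
  have hpa : p 0 = a :=
    H.beliefOfPrice_left ▸ H.optimalPrice_beliefOfPrice hp ⟨le_rfl, H.lt.le⟩
  have hpb : p 1 = b :=
    H.beliefOfPrice_right ▸ H.optimalPrice_beliefOfPrice hp ⟨H.lt.le, le_rfl⟩
  rw [← hpa, ← hpb]
  exact (H.strictMonoOn_optimalPrice hp).mapsTo_Ioo hμ

theorem hasDerivAt_optimalPrice (H : IsMarginalRevenuePair g h a b)
    (hp : IsOptimalPrice g h a b p) (hμ : μ ∈ Ioo 0 1) :
    HasDerivAt p (beliefOfPriceDeriv g h (p μ))⁻¹ μ :=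
  hasDerivAt_of_leftInvOn isOpen_Ioo
    (fun _ hν => (H.continuousOn_optimalPrice hp).continuousAt (Icc_mem_nhds hν.1 hν.2))
    (fun _ hν => H.beliefOfPrice_optimalPrice hp (Ioo_subset_Icc_self hν))
    (fun _ hν => H.hasDerivAt_beliefOfPrice (Ioo_subset_Icc_self (H.optimalPrice_mem_Ioo hp hν)))
    (fun _ hν => (H.beliefOfPriceDeriv_pos
      (Ioo_subset_Icc_self (H.optimalPrice_mem_Ioo hp hν))).ne') hμ

theorem hasDerivAt_deriv_optimalPrice (H : IsMarginalRevenuePair g h a b)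
    (hp : IsOptimalPrice g h a b p) (hg' : ∀ q ∈ Ioo a b, DifferentiableAt ℝ (deriv g) q)
    (hh' : ∀ q ∈ Ioo a b, DifferentiableAt ℝ (deriv h) q) (hμ : μ ∈ Ioo 0 1) :
    HasDerivAt (deriv p)
      (-beliefOfPriceDeriv2 g h (p μ) / beliefOfPriceDeriv g h (p μ) ^ 3) μ := by
  have hpIoo := fun ν (hν : ν ∈ Ioo (0 : ℝ) 1) => H.optimalPrice_mem_Ioo hp hν
  exact hasDerivAt_deriv_of_leftInvOn isOpen_Ioo
    (fun _ hν => (H.continuousOn_optimalPrice hp).continuousAt (Icc_mem_nhds hν.1 hν.2))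
    (fun _ hν => H.beliefOfPrice_optimalPrice hp (Ioo_subset_Icc_self hν))
    (fun _ hν => H.hasDerivAt_beliefOfPrice (Ioo_subset_Icc_self (hpIoo _ hν)))
    (fun _ hν => hasDerivAt_beliefOfPriceDeriv
      (H.differentiableAt_g _ (Ioo_subset_Icc_self (hpIoo _ hν)))
      (H.differentiableAt_h _ (Ioo_subset_Icc_self (hpIoo _ hν)))
      (hg' _ (hpIoo _ hν)) (hh' _ (hpIoo _ hν))
      (H.g_lt_h (Ioo_subset_Icc_self (hpIoo _ hν))).ne)
    (fun _ hν => (H.beliefOfPriceDeriv_pos (Ioo_subset_Icc_self (hpIoo _ hν))).ne') hμ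

theorem convexOn_optimalPrice (H : IsMarginalRevenuePair g h a b)
    (hp : IsOptimalPrice g h a b p) (hg' : ∀ q ∈ Ioo a b, DifferentiableAt ℝ (deriv g) q)
    (hh' : ∀ q ∈ Ioo a b, DifferentiableAt ℝ (deriv h) q)
    (hcurv : ∀ q ∈ Ioo a b, beliefOfPriceDeriv2 g h q ≤ 0) :
    (∀ μ ∈ Ioo (0 : ℝ) 1, 0 ≤ deriv (deriv p) μ) ∧ ConvexOn ℝ (Icc 0 1) p := by
  have hsign : ∀ μ ∈ Ioo (0 : ℝ) 1,
      0 ≤ -beliefOfPriceDeriv2 g h (p μ) / beliefOfPriceDeriv g h (p μ) ^ 3 := fun μ hμ =>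
    have hq := H.optimalPrice_mem_Ioo hp hμ
    div_nonneg (neg_nonneg.2 (hcurv _ hq))
      (pow_pos (H.beliefOfPriceDeriv_pos (Ioo_subset_Icc_self hq)) 3).le
  refine ⟨fun μ hμ =>
    (H.hasDerivAt_deriv_optimalPrice hp hg' hh' hμ).deriv ▸ hsign μ hμ, ?_⟩
  refine convexOn_of_hasDerivWithinAt2_nonneg (convex_Icc 0 1) (H.continuousOn_optimalPrice hp)
    (f' := deriv p)
    (f'' := fun μ => -beliefOfPriceDeriv2 g h (p μ) / beliefOfPriceDeriv g h (p μ) ^ 3)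
    ?_ ?_ ?_ <;> rw [interior_Icc]
  · exact fun μ hμ =>
      (H.hasDerivAt_optimalPrice hp hμ).differentiableAt.hasDerivAt.hasDerivWithinAt
  · exact fun μ hμ => (H.hasDerivAt_deriv_optimalPrice hp hg' hh' hμ).hasDerivWithinAt
  · exact hsign

theorem concaveOn_optimalPrice (H : IsMarginalRevenuePair g h a b)
    (hp : IsOptimalPrice g h a b p) (hg' : ∀ q ∈ Ioo a b, DifferentiableAt ℝ (deriv g) q)
    (hh' : ∀ q ∈ Ioo a b, DifferentiableAt ℝ (deriv h) q)
    (hcurv : ∀ q ∈ Ioo a b, 0 ≤ beliefOfPriceDeriv2 g h q) :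
    (∀ μ ∈ Ioo (0 : ℝ) 1, deriv (deriv p) μ ≤ 0) ∧ ConcaveOn ℝ (Icc 0 1) p := by
  have hsign : ∀ μ ∈ Ioo (0 : ℝ) 1,
      -beliefOfPriceDeriv2 g h (p μ) / beliefOfPriceDeriv g h (p μ) ^ 3 ≤ 0 := fun μ hμ =>
    have hq := H.optimalPrice_mem_Ioo hp hμ
    div_nonpos_of_nonpos_of_nonneg (neg_nonpos.2 (hcurv _ hq))
      (pow_pos (H.beliefOfPriceDeriv_pos (Ioo_subset_Icc_self hq)) 3).le
  refine ⟨fun μ hμ =>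
    (H.hasDerivAt_deriv_optimalPrice hp hg' hh' hμ).deriv ▸ hsign μ hμ, ?_⟩
  refine concaveOn_of_hasDerivWithinAt2_nonpos (convex_Icc 0 1) (H.continuousOn_optimalPrice hp)
    (f' := deriv p)
    (f'' := fun μ => -beliefOfPriceDeriv2 g h (p μ) / beliefOfPriceDeriv g h (p μ) ^ 3)
    ?_ ?_ ?_ <;> rw [interior_Icc]
  · exact fun μ hμ =>
      (H.hasDerivAt_optimalPrice hp hμ).differentiableAt.hasDerivAt.hasDerivWithinAt
  · exact fun μ hμ => (H.hasDerivAt_deriv_optimalPrice hp hg' hh' hμ).hasDerivWithinAt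
  · exact hsign

end IsMarginalRevenuePair

theorem stmt_7_general
    (I : Set ℝ) (DL DH RL RH : ℝ → ℝ) (pLs pHs : ℝ)
    (hIopen : IsOpen I) (hIconv : Convex ℝ I)
    (hRL : RL = fun q => q * DL q) (hRH : RH = fun q => q * DH q)
    (hDL : ContDiffOn ℝ 3 DL I) (hDH : ContDiffOn ℝ 3 DH I)
    (hRL'' : ∀ q ∈ I, deriv (deriv RL) q < 0) (hRH'' : ∀ q ∈ I, deriv (deriv RH) q < 0)
    (hpLs : pLs ∈ I) (hpHs : pHs ∈ I) (hlt : pLs < pHs)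
    (hRL' : deriv RL pLs = 0) (hRH' : deriv RH pHs = 0)
    (p : ℝ → ℝ)
    (hp : ∀ μ ∈ Set.Icc (0:ℝ) 1, p μ ∈ Set.Icc pLs pHs ∧
      (1 - μ) * deriv RL (p μ) + μ * deriv RH (p μ) = 0) :
    ((∀ q ∈ Set.Ioo pLs pHs,
        0 ≤ deriv (deriv (deriv RL)) q ∧ 0 ≤ deriv (deriv (deriv RH)) q ∧
          deriv (deriv RL) q ≤ deriv (deriv RH) q) →
      (∀ μ ∈ Set.Ioo (0:ℝ) 1, 0 ≤ deriv (deriv p) μ) ∧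
        ConvexOn ℝ (Set.Icc (0:ℝ) 1) p) ∧
    ((∀ q ∈ Set.Ioo pLs pHs,
        deriv (deriv (deriv RL)) q ≤ 0 ∧ deriv (deriv (deriv RH)) q ≤ 0 ∧
          deriv (deriv RH) q ≤ deriv (deriv RL) q) →
      (∀ μ ∈ Set.Ioo (0:ℝ) 1, deriv (deriv p) μ ≤ 0) ∧
        ConcaveOn ℝ (Set.Icc (0:ℝ) 1) p) := by
  have hIcc : Icc pLs pHs ⊆ I := hIconv.ordConnected.out hpLs hpHs
  obtain ⟨hRL1, hRL2⟩ := (hRL ▸ contDiffOn_id.mul hDL).differentiableOn_deriv_deriv hIopen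
  obtain ⟨hRH1, hRH2⟩ := (hRH ▸ contDiffOn_id.mul hDH).differentiableOn_deriv_deriv hIopen
  have hdiff {f : ℝ → ℝ} (hf : DifferentiableOn ℝ f I) (q : ℝ) (hq : q ∈ Icc pLs pHs) :
      DifferentiableAt ℝ f q :=
    hf.differentiableAt (hIopen.mem_nhds (hIcc hq))
  have H : IsMarginalRevenuePair (deriv RL) (deriv RH) pLs pHs :=
    ⟨hlt, hdiff hRL1, hdiff hRH1, fun q hq => hRL'' q (hIcc hq), fun q hq => hRH'' q (hIcc hq),
      hRL', hRH'⟩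
  have hRL2' : ∀ q ∈ Ioo pLs pHs, DifferentiableAt ℝ (deriv (deriv RL)) q :=
    fun q hq => hdiff hRL2 q (Ioo_subset_Icc_self hq)
  have hRH2' : ∀ q ∈ Ioo pLs pHs, DifferentiableAt ℝ (deriv (deriv RH)) q :=
    fun q hq => hdiff hRH2 q (Ioo_subset_Icc_self hq)
  refine ⟨fun hconvex => H.convexOn_optimalPrice hp hRL2' hRH2' fun q hq => ?_,
    fun hconcave => H.concaveOn_optimalPrice hp hRL2' hRH2' fun q hq => ?_⟩
  · obtain ⟨hL, hH, hLH⟩ := hconvex q hq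
    have hq' := Ioo_subset_Icc_self hq
    exact beliefOfPriceDeriv2_nonpos (H.g_nonpos hq') (H.h_nonneg hq') (H.g_lt_h hq')
      (H.slope_pos hq').le hL hH hLH
  · obtain ⟨hL, hH, hHL⟩ := hconcave q hq
    have hq' := Ioo_subset_Icc_self hq
    exact beliefOfPriceDeriv2_nonneg (H.g_nonpos hq') (H.h_nonneg hq') (H.g_lt_h hq')
      (H.slope_pos hq').le hL hH hHL

/-- (Curvature of the optimal-price function.) In the binary monopoly model
with `D_L, D_H` three times continuously differentiable: if `R_L''' ≥ 0`, `R_H''' ≥ 0` and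
`R_H'' ≥ R_L''` on `(p_L*, p_H*)` then the optimal-price function is convex
(`p'' ≥ 0` on `(0,1)`); if the opposite inequalities hold then it is concave. -/
theorem stmt_7
    (I : Set ℝ) (DL DH RL RH : ℝ → ℝ) (pLs pHs : ℝ)
    (hIopen : IsOpen I) (hIconv : Convex ℝ I) (hIpos : I ⊆ Set.Ioi (0:ℝ))
    (hRL : RL = fun q => q * DL q) (hRH : RH = fun q => q * DH q)
    (hDL : ContDiffOn ℝ 3 DL I) (hDH : ContDiffOn ℝ 3 DH I)
    (hDLpos : ∀ q ∈ I, 0 < DL q) (hDHpos : ∀ q ∈ I, 0 < DH q)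
    (hDL' : ∀ q ∈ I, deriv DL q < 0) (hDH' : ∀ q ∈ I, deriv DH q < 0)
    (hRL'' : ∀ q ∈ I, deriv (deriv RL) q < 0) (hRH'' : ∀ q ∈ I, deriv (deriv RH) q < 0)
    (hpLs : pLs ∈ I) (hpHs : pHs ∈ I) (hlt : pLs < pHs)
    (hRL' : deriv RL pLs = 0) (hRH' : deriv RH pHs = 0)
    (p : ℝ → ℝ)
    (hp : ∀ μ ∈ Set.Icc (0:ℝ) 1, p μ ∈ Set.Icc pLs pHs ∧
      (1 - μ) * deriv RL (p μ) + μ * deriv RH (p μ) = 0) :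
    ((∀ q ∈ Set.Ioo pLs pHs,
        0 ≤ deriv (deriv (deriv RL)) q ∧ 0 ≤ deriv (deriv (deriv RH)) q ∧
          deriv (deriv RL) q ≤ deriv (deriv RH) q) →
      (∀ μ ∈ Set.Ioo (0:ℝ) 1, 0 ≤ deriv (deriv p) μ) ∧
        ConvexOn ℝ (Set.Icc (0:ℝ) 1) p) ∧
    ((∀ q ∈ Set.Ioo pLs pHs,
        deriv (deriv (deriv RL)) q ≤ 0 ∧ deriv (deriv (deriv RH)) q ≤ 0 ∧
          deriv (deriv RH) q ≤ deriv (deriv RL) q) →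
      (∀ μ ∈ Set.Ioo (0:ℝ) 1, deriv (deriv p) μ ≤ 0) ∧
        ConcaveOn ℝ (Set.Icc (0:ℝ) 1) p) :=
  stmt_7_general I DL DH RL RH pLs pHs hIopen hIconv hRL hRH hDL hDH hRL'' hRH'' hpLs hpHs hlt hRL'
    hRH' p hp
end
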